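/- arXiv:1601.06588 — 11 statements merged into one kernel-verified Lean document; each statement's English description precedes it below -/
import Mathlib

section
/- Let f(λ,∂) ∈ ℂ[λ,∂] be a polynomial satisfying (∂+λ+2μ)f(λ,∂) − (∂+2μ)f(λ,∂+μ) = (∂+2λ+2μ)f(λ,−λ−μ) for all λ,μ,∂. Then f has degree at most 1 in ∂, i.e., f(λ,∂) = a₀(λ) + a₁(λ)∂ for some a₀,a₁ ∈ ℂ[λ]. -/
open MvPolynomial

private lemma eval_aeval_poly (f : MvPolynomial (Fin 2) ℂ) (v : Fin 2 → Polynomial ℂ)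
    (l : ℂ) : (aeval v f).eval l = eval (fun i => (v i).eval l) f := by
  induction f using MvPolynomial.induction_on with
  | C a => simp
  | add p q hp hq => simp [hp, hq]
  | mul_X p i hp => simp [hp]

/-- If `f(λ,∂)` satisfies
`(∂+λ+2μ)f(λ,∂) − (∂+2μ)f(λ,∂+μ) = (∂+2λ+2μ)f(λ,−λ−μ)` for all `λ,μ,∂`, then
`f(λ,∂) = a₀(λ) + a₁(λ)∂`.  Variable `0` is `λ`, variable `1` is `∂`. -/
theorem stmt0 (f : MvPolynomial (Fin 2) ℂ)
    (hf : ∀ l m d : ℂ,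
      (d + l + 2*m) * eval ![l, d] f - (d + 2*m) * eval ![l, d + m] f
        = (d + 2*l + 2*m) * eval ![l, -l - m] f) :
    ∃ a₀ a₁ : Polynomial ℂ, ∀ l d : ℂ,
      eval ![l, d] f = a₀.eval l + a₁.eval l * d := by
  -- μ = 0 in the functional equation
  have key : ∀ l d : ℂ, l * eval ![l, d] f = (d + 2*l) * eval ![l, -l] f := by
    intro l d
    have h := hf l 0 d
    norm_num at h
    linear_combination h
  have heval : ∀ (c l : ℂ),
      (aeval ![Polynomial.X, Polynomial.C c] f).eval l = eval ![l, c] f := by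
    intro c l
    rw [eval_aeval_poly]
    have hv : (fun i => (![Polynomial.X, Polynomial.C c] i).eval l) = ![l, c] := by
      funext i; fin_cases i <;> simp
    rw [hv]
  set a₀ : Polynomial ℂ := aeval ![Polynomial.X, Polynomial.C (0:ℂ)] f with ha₀
  set a₁ : Polynomial ℂ := aeval ![Polynomial.X, Polynomial.C (1:ℂ)] f - a₀ with ha₁
  refine ⟨a₀, a₁, ?_⟩
  -- pointwise statement for l ≠ 0
  have main : ∀ l d : ℂ, l ≠ 0 →
      eval ![l, d] f = a₀.eval l + a₁.eval l * d := by
    intro l d hl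
    rw [ha₁, ha₀]
    simp only [Polynomial.eval_sub]
    rw [heval, heval]
    apply mul_left_cancel₀ hl
    linear_combination key l d - (1 - d) * key l 0 - d * key l 1
  intro l d
  -- fix d, consider the polynomial in λ
  set q : Polynomial ℂ :=
    aeval ![Polynomial.X, Polynomial.C d] f - (a₀ + a₁ * Polynomial.C d) with hq
  have hqeval : ∀ x : ℂ, q.eval x = eval ![x, d] f - (a₀.eval x + a₁.eval x * d) := by
    intro x
    simp [hq, heval]
  have hq0 : q = 0 := by
    apply Polynomial.eq_zero_of_infinite_isRoot
    apply Set.Infinite.mono (s := {x : ℂ | x ≠ 0})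
    · intro x hx
      simp only [Set.mem_setOf_eq, Polynomial.IsRoot, hqeval]
      rw [main x d hx]
      ring
    · have : ({(0:ℂ)}ᶜ : Set ℂ).Infinite := (Set.finite_singleton 0).infinite_compl
      exact this
  have h0 := hqeval l
  rw [hq0, Polynomial.eval_zero] at h0
  linear_combination -h0
end

section
/- Let h(λ,∂) ∈ ℂ[λ,∂] be a polynomial satisfying (∂+λ+2μ)h(λ,∂) = (∂+2μ)h(λ,∂+μ) for all λ,μ,∂. Then h = 0. -/
open MvPolynomial

/-- If `h(λ,∂)` satisfies `(∂+λ+2μ)h(λ,∂) = (∂+2μ)h(λ,∂+μ)` for all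
`λ,μ,∂`, then `h = 0`.  Variable `0` is `λ`, variable `1` is `∂`. -/
theorem stmt1 (h : MvPolynomial (Fin 2) ℂ)
    (hh : ∀ l m d : ℂ,
      (d + l + 2*m) * eval ![l, d] h = (d + 2*m) * eval ![l, d + m] h) :
    h = 0 := by
  have key : ∀ l d : ℂ, l * eval ![l, d] h = 0 := by
    intro l d
    have h1 := hh l (-d/2) d
    have e1 : d + l + 2 * (-d/2) = l := by ring
    have e2 : d + 2 * (-d/2) = 0 := by ring
    rw [e1, e2, zero_mul] at h1
    exact h1
  have hz : (X 0 : MvPolynomial (Fin 2) ℂ) * h = 0 := by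
    apply MvPolynomial.funext
    intro x
    have hx : x = ![x 0, x 1] := by
      funext i; fin_cases i <;> rfl
    rw [map_mul, eval_X, map_zero, hx]
    exact key (x 0) (x 1)
  rcases mul_eq_zero.mp hz with h0 | h0
  · exact absurd h0 (MvPolynomial.X_ne_zero 0)
  · exact h0
end

section
/- Every conformal derivation of the W(2,2) Lie conformal algebra 𝒲 is inner, i.e., CDer(𝒲) = CInn(𝒲). -/
open MvPolynomial


private lemma keyA (P : Polynomial ℂ) (c : ℂ)
    (h : ∀ t : ℂ, P.eval (2*t + c) = 2 * P.eval t) :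
    ∀ d : ℂ, P.eval d = (P.eval 1 - P.eval 0) * (d + c) := by
  have hdeg : P.natDegree ≤ 1 := by
    by_contra hn
    push_neg at hn
    have hP : P ≠ 0 := by
      intro h0; rw [h0] at hn; simp at hn
    have hq : ((Polynomial.C (2:ℂ)) * Polynomial.X + Polynomial.C c).natDegree = 1 :=
      Polynomial.natDegree_linear two_ne_zero
    have hcomp : P.comp (Polynomial.C (2:ℂ) * Polynomial.X + Polynomial.C c)
        = Polynomial.C 2 * P := by
      apply Polynomial.funext
      intro r
      simp [Polynomial.eval_comp, h r]
    have hlc := Polynomial.leadingCoeff_comp (p := P)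
      (q := Polynomial.C (2:ℂ) * Polynomial.X + Polynomial.C c)
      (by rw [hq]; exact one_ne_zero)
    rw [hcomp, Polynomial.leadingCoeff_linear two_ne_zero, Polynomial.leadingCoeff_mul,
      Polynomial.leadingCoeff_C] at hlc
    have hPlc : P.leadingCoeff ≠ 0 := Polynomial.leadingCoeff_ne_zero.mpr hP
    have h2n : (2:ℂ) ^ P.natDegree = 2 :=
      mul_left_cancel₀ hPlc (by linear_combination -hlc)
    have h2n' : (2:ℕ) ^ P.natDegree = 2 ^ 1 := by
      have : ((2:ℕ)^P.natDegree : ℂ) = ((2^1 : ℕ) : ℂ) := by push_cast; simpa using h2n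
      exact_mod_cast this
    have := Nat.pow_right_injective (le_refl 2) h2n'
    omega
  have rep := Polynomial.eq_X_add_C_of_natDegree_le_one hdeg
  have h0 := h 0
  rw [rep] at h0 ⊢
  intro d
  simp only [Polynomial.eval_add, Polynomial.eval_mul, Polynomial.eval_C,
    Polynomial.eval_X] at h0 ⊢
  linear_combination -h0

private lemma evalAeval (f : MvPolynomial (Fin 2) ℂ) (u v : Polynomial ℂ) (x : ℂ) :
    (MvPolynomial.aeval ![u, v] f).eval x = MvPolynomial.eval ![u.eval x, v.eval x] f := by
  induction f using MvPolynomial.induction_on with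
  | C a => simp [Algebra.algebraMap_eq_smul_one]
  | add p q hp hq => simp [hp, hq]
  | mul_X p i hp => fin_cases i <;> simp [hp]

private lemma extend0 (R : Polynomial ℂ) (h : ∀ l : ℂ, l ≠ 0 → R.eval l = 0) :
    ∀ l : ℂ, R.eval l = 0 := by
  have : R = 0 := by
    apply Polynomial.eq_zero_of_infinite_isRoot
    apply Set.Infinite.mono (s := {x : ℂ | x ≠ 0})
    · intro x hx; exact h x hx
    · exact Set.Finite.infinite_compl (Set.finite_singleton 0)
  simp [this]

private lemma extend (F : MvPolynomial (Fin 2) ℂ) (G : Polynomial ℂ)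
    (h : ∀ l d : ℂ, l ≠ 0 → MvPolynomial.eval ![l, d] F = G.eval l * (d + 2*l)) :
    ∀ l d : ℂ, MvPolynomial.eval ![l, d] F = G.eval l * (d + 2*l) := by
  intro l d
  set R : Polynomial ℂ := MvPolynomial.aeval ![Polynomial.X, Polynomial.C d] F
      - G * (Polynomial.C d + Polynomial.C 2 * Polynomial.X) with hR
  have hRe : ∀ x : ℂ, R.eval x = MvPolynomial.eval ![x, d] F - G.eval x * (d + 2*x) := by
    intro x
    simp only [hR, Polynomial.eval_sub, Polynomial.eval_mul, Polynomial.eval_add,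
      Polynomial.eval_C, Polynomial.eval_X, evalAeval]
    try ring
  have := extend0 R (fun x hx => by rw [hRe x, h x d hx]; ring) l
  rw [hRe l] at this
  exact sub_eq_zero.mp this

/-- From the cocycle equation `hLL₁`-form, deduce the linear form. -/
private lemma solveLL (f : MvPolynomial (Fin 2) ℂ)
    (hf : ∀ l m d : ℂ,
      (d + l + 2*m) * MvPolynomial.eval ![l, d] f - (d + 2*m) * MvPolynomial.eval ![l, d + m] f
        = (d + 2*l + 2*m) * MvPolynomial.eval ![l, -l - m] f) :
    ∀ l d : ℂ, MvPolynomial.eval ![l, d] f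
      = ((MvPolynomial.aeval ![Polynomial.X, Polynomial.C 1] f
          - MvPolynomial.aeval ![Polynomial.X, Polynomial.C 0] f : Polynomial ℂ)).eval l
          * (d + 2*l) := by
  set A : Polynomial ℂ := MvPolynomial.aeval ![Polynomial.X, Polynomial.C 1] f
      - MvPolynomial.aeval ![Polynomial.X, Polynomial.C 0] f with hA
  apply extend
  intro l d hl
  set P : Polynomial ℂ := MvPolynomial.aeval ![Polynomial.C l, Polynomial.X] f with hPdef
  have hP : ∀ t : ℂ, P.eval t = MvPolynomial.eval ![l, t] f := by
    intro t
    simp [hPdef, evalAeval]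
  have hfun : ∀ t : ℂ, P.eval (2*t + 2*l) = 2 * P.eval t := by
    intro t
    have h := hf l (-l - t) (2*t + 2*l)
    rw [show -l - (-l - t) = t from by ring] at h
    rw [hP, hP]
    refine mul_left_cancel₀ hl ?_
    linear_combination h
  have key := keyA P (2*l) hfun d
  have hAl : A.eval l = P.eval 1 - P.eval 0 := by
    simp [hA, hP, evalAeval]
  rw [hP] at key
  rw [key, hAl]

/-- every conformal derivation of the W(2,2) Lie conformal algebra
`𝒲 = ℂ[∂]L ⊕ ℂ[∂]M` (with `[L_λ L] = (∂+2λ)L`, `[L_λ M] = (∂+2λ)M`,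
`[M_λ M] = 0`) is inner.

A conformal derivation `d` is determined (by conformal sesquilinearity) by
`d_λ L = f₁(λ,∂)L + f₂(λ,∂)M` and `d_λ M = h₁(λ,∂)L + h₂(λ,∂)M`.  The Leibniz
rule applied to `[L_μ L]`, `[L_μ M]` and `[M_μ M]` is equivalent to hypotheses
`hLL₁, hLL₂, hLM_L, hLM_M, hMM` below (variable `0` is `λ`, variable `1` is
`∂`).  The derivation `d` is inner, i.e. `d = (ad a)_λ` with
`a = p(∂)L + q(∂)M`, iff `f₁(λ,∂) = p(−λ)(∂+2λ)`, `f₂(λ,∂) = q(−λ)(∂+2λ)`,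
`h₁ = 0` and `h₂(λ,∂) = p(−λ)(∂+2λ)`. -/
theorem stmt2 (f₁ f₂ h₁ h₂ : MvPolynomial (Fin 2) ℂ)
    (hLL₁ : ∀ l m d : ℂ,
      (d + l + 2*m) * eval ![l, d] f₁ - (d + 2*m) * eval ![l, d + m] f₁
        = (d + 2*l + 2*m) * eval ![l, -l - m] f₁)
    (hLL₂ : ∀ l m d : ℂ,
      (d + l + 2*m) * eval ![l, d] f₂ - (d + 2*m) * eval ![l, d + m] f₂
        = (d + 2*l + 2*m) * eval ![l, -l - m] f₂)
    (hLM_L : ∀ l m d : ℂ,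
      (d + l + 2*m) * eval ![l, d] h₁ = (d + 2*m) * eval ![l, d + m] h₁)
    (hLM_M : ∀ l m d : ℂ,
      (d + l + 2*m) * eval ![l, d] h₂
        = (d + 2*m) * eval ![l, d + m] h₂
          + eval ![l, -l - m] f₁ * (d + 2*l + 2*m))
    (hMM : ∀ l m d : ℂ,
      eval ![l, -l - m] h₁ * (d + 2*l + 2*m)
        + eval ![l, d + m] h₁ * (d + 2*m) = 0) :
    ∃ p q : Polynomial ℂ,
      (∀ l d : ℂ, eval ![l, d] f₁ = p.eval (-l) * (d + 2*l)) ∧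
      (∀ l d : ℂ, eval ![l, d] f₂ = q.eval (-l) * (d + 2*l)) ∧
      h₁ = 0 ∧
      (∀ l d : ℂ, eval ![l, d] h₂ = p.eval (-l) * (d + 2*l)) := by
  set A₁ : Polynomial ℂ := MvPolynomial.aeval ![Polynomial.X, Polynomial.C 1] f₁
      - MvPolynomial.aeval ![Polynomial.X, Polynomial.C 0] f₁ with hA₁
  set A₂ : Polynomial ℂ := MvPolynomial.aeval ![Polynomial.X, Polynomial.C 1] f₂
      - MvPolynomial.aeval ![Polynomial.X, Polynomial.C 0] f₂ with hA₂
  have claim₁ := solveLL f₁ hLL₁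
  have claim₂ := solveLL f₂ hLL₂
  rw [← hA₁] at claim₁
  rw [← hA₂] at claim₂
  -- p, q
  refine ⟨A₁.comp (-Polynomial.X), A₂.comp (-Polynomial.X), ?_, ?_, ?_, ?_⟩
  · intro l d
    rw [claim₁ l d]
    simp [Polynomial.eval_comp]
  · intro l d
    rw [claim₂ l d]
    simp [Polynomial.eval_comp]
  · -- h₁ = 0
    have hz : ∀ l d : ℂ, eval ![l, d] h₁ = 0 := by
      have := extend h₁ 0 (fun l d hl => by
        have h := hLM_L l 0 d
        rw [show d + (0:ℂ) = d from add_zero d] at h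
        have : l * eval ![l, d] h₁ = 0 := by linear_combination h
        rcases mul_eq_zero.mp this with h' | h'
        · exact absurd h' hl
        · simp [h'])
      intro l d
      simpa using this l d
    apply MvPolynomial.funext
    intro x
    have hx : ![x 0, x 1] = x := by
      funext i; fin_cases i <;> rfl
    have := hz (x 0) (x 1)
    rw [hx] at this
    simpa using this
  · -- h₂
    have hh : ∀ l d : ℂ, eval ![l, d] h₂ = A₁.eval l * (d + 2*l) := by
      apply extend
      intro l d hl
      have hm := hLM_M l 0 d
      rw [show d + (0:ℂ) = d from add_zero d, show -l - (0:ℂ) = -l from sub_zero (-l)] at hm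
      have c2 := claim₁ l (-l)
      have key : l * eval ![l, d] h₂ = l * (A₁.eval l * (d + 2*l)) := by
        linear_combination hm + (d + 2*l) * c2
      exact mul_left_cancel₀ hl key
    intro l d
    rw [hh l d]
    simp [Polynomial.eval_comp]
end

section
/- Let a: ℂ → ℂ[λ] assign to each λ a value a_λ ∈ ℂ, viewed as a polynomial a(λ) ∈ ℂ[λ], satisfying (λ+2μ)a(λ) − (μ+2λ)a(μ) = (λ−μ)a(λ+μ) for all λ, μ ∈ ℂ. Then a(λ) = a₁λ + a₃λ³ for some constants a₁, a₃ ∈ ℂ. -/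
/-- If `a ∈ ℂ[λ]` satisfies
`(λ+2μ)a(λ) − (μ+2λ)a(μ) = (λ−μ)a(λ+μ)` for all `λ, μ ∈ ℂ`, then
`a(λ) = a₁λ + a₃λ³` for some constants `a₁, a₃ ∈ ℂ`. -/
theorem stmt3 (a : Polynomial ℂ)
    (ha : ∀ l m : ℂ,
      (l + 2*m) * a.eval l - (m + 2*l) * a.eval m = (l - m) * a.eval (l + m)) :
    ∃ a₁ a₃ : ℂ, ∀ l : ℂ, a.eval l = a₁ * l + a₃ * l^3 := by
  -- a(0) = 0
  have h0 : a.eval 0 = 0 := by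
    have := ha 1 0
    simp at this
    exact this
  set a₃ : ℂ := (a.eval 2 - 2 * a.eval 1) / 6 with ha3
  set a₁ : ℂ := a.eval 1 - a₃ with ha1
  refine ⟨a₁, a₃, ?_⟩
  set b : Polynomial ℂ := a - Polynomial.C a₁ * Polynomial.X - Polynomial.C a₃ * Polynomial.X ^ 3 with hb
  have hbe : ∀ t : ℂ, b.eval t = a.eval t - a₁ * t - a₃ * t ^ 3 := by
    intro t; simp [hb]
  have hfe : ∀ l m : ℂ,
      (l + 2*m) * b.eval l - (m + 2*l) * b.eval m = (l - m) * b.eval (l + m) := by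
    intro l m
    simp only [hbe]
    linear_combination ha l m
  have hb0 : b.eval 0 = 0 := by rw [hbe]; ring_nf; simpa using h0
  have hb1 : b.eval 1 = 0 := by rw [hbe, ha1]; ring
  have hb2 : b.eval 2 = 0 := by rw [hbe, ha1, ha3]; ring
  -- b vanishes at all naturals
  have hnat : ∀ n : ℕ, b.eval (n : ℂ) = 0 := by
    have key : ∀ n : ℕ, 2 ≤ n → b.eval (n : ℂ) = 0 := by
      intro n hn
      induction n, hn using Nat.le_induction with
      | base => exact_mod_cast hb2
      | succ n hn ih =>
        have h := hfe (n : ℂ) 1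
        rw [ih, hb1] at h
        have hne : (n : ℂ) - 1 ≠ 0 := by
          intro hc
          have : (n : ℂ) = 1 := by linear_combination hc
          have : n = 1 := by exact_mod_cast this
          omega
        have : b.eval ((n : ℂ) + 1) = 0 := by
          have h' : ((n : ℂ) - 1) * b.eval ((n : ℂ) + 1) = 0 := by linear_combination -h
          rcases mul_eq_zero.mp h' with h | h
          · first | exact h | exact absurd h hne
          · first | exact h | exact absurd h hne
        push_cast
        exact this
    intro n
    match n with
    | 0 => simpa using hb0
    | 1 => simpa using hb1
    | (n+2) => exact key (n+2) (by omega)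
  have hbz : b = 0 := by
    apply Polynomial.eq_zero_of_infinite_isRoot
    apply Set.Infinite.mono (s := Set.range (fun n : ℕ => (n : ℂ)))
    · rintro x ⟨n, rfl⟩; exact hnat n
    · exact Set.infinite_range_of_injective Nat.cast_injective
  intro l
  have := hbe l
  rw [hbz] at this
  simp at this
  linear_combination -this
end

section
/- Let g ∈ ℂ[λ] be a polynomial satisfying (λ−μ)g(λ+μ) = −(2λ+μ)g(μ) for all λ, μ. Then g = 0. -/
/-- If `g ∈ ℂ[λ]` satisfies `(λ−μ)g(λ+μ) = −(2λ+μ)g(μ)` for all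
`λ, μ`, then `g = 0`. -/
theorem stmt4 (g : Polynomial ℂ)
    (hg : ∀ l m : ℂ, (l - m) * g.eval (l + m) = -(2*l + m) * g.eval m) :
    g = 0 := by
  have h1 : ∀ l : ℂ, l ≠ 0 → g.eval l = 0 := by
    intro l hl
    have := hg l l
    simp at this
    have h3 : (-(2*l + l)) ≠ 0 := by
      intro h; apply hl; have : (3:ℂ) * l = 0 := by linear_combination -h
      simpa using this
    rcases this with h | h
    · exact absurd (by linear_combination h) h3
    · exact h
  have h0 : g.eval 0 = 0 := by
    have := hg 1 0
    simp [h1 1 one_ne_zero] at this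
    exact this
  apply Polynomial.zero_of_eval_zero
  intro x
  by_cases hx : x = 0
  · simpa [hx] using h0
  · exact h1 x hx
end

section
/- Let g ∈ ℂ[λ,∂] satisfy g(∂,λ)·g(∂+λ,μ) = g(∂,μ)·g(∂+μ,λ) as polynomials in λ, μ, ∂. Then g does not depend on ∂, i.e., g(∂,λ) = g(λ) for some g ∈ ℂ[λ]. -/
open MvPolynomial

namespace Stmt6Aux

variable {R : Type*} [CommRing R]

lemma coeff_mul_top {p q : Polynomial R} {n : ℕ} (hn : 1 ≤ n)
    (hp : p.natDegree ≤ n) (hq : q.natDegree ≤ n) :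
    (p * q).coeff (2 * n - 1) =
      p.coeff (n - 1) * q.coeff n + p.coeff n * q.coeff (n - 1) := by
  rw [Polynomial.coeff_mul]
  have hsub : ({(n - 1, n), (n, n - 1)} : Finset (ℕ × ℕ)) ⊆ Finset.HasAntidiagonal.antidiagonal (2 * n - 1) := by
    intro x hx
    simp only [Finset.mem_insert, Finset.mem_singleton] at hx
    rcases hx with rfl | rfl <;> simp [Finset.mem_antidiagonal] <;> omega
  rw [← Finset.sum_subset hsub]
  · rw [Finset.sum_insert (by simp; omega), Finset.sum_singleton]
  · intro x hx hxs
    obtain ⟨x1, x2⟩ := x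
    simp only [Finset.HasAntidiagonal.mem_antidiagonal] at hx
    simp only [Finset.mem_insert, Finset.mem_singleton, not_or, Prod.mk.injEq, not_and] at hxs
    rcases le_or_gt x1 n with h1 | h1
    · have h2 : n < x2 := by omega
      rw [Polynomial.coeff_eq_zero_of_natDegree_lt (lt_of_le_of_lt hq h2), mul_zero]
    · rw [Polynomial.coeff_eq_zero_of_natDegree_lt (lt_of_le_of_lt hp h1), zero_mul]

lemma taylor_coeff_top {p : Polynomial R} {n : ℕ} (h : p.natDegree ≤ n) (r : R) :
    (Polynomial.taylor r p).coeff n = p.coeff n := by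
  rw [Polynomial.taylor_coeff]
  have hh : Polynomial.hasseDeriv n p = Polynomial.C (p.coeff n) := by
    ext k
    rw [Polynomial.hasseDeriv_coeff, Polynomial.coeff_C]
    match k with
    | 0 => simp
    | k + 1 =>
      rw [Polynomial.coeff_eq_zero_of_natDegree_lt (by omega)]
      simp
  rw [hh, Polynomial.eval_C]

lemma taylor_coeff_subtop {p : Polynomial R} {n : ℕ} (hn : 1 ≤ n) (h : p.natDegree ≤ n) (r : R) :
    (Polynomial.taylor r p).coeff (n - 1) = p.coeff (n - 1) + n * r * p.coeff n := by
  rw [Polynomial.taylor_coeff]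
  have hh : Polynomial.hasseDeriv (n - 1) p =
      Polynomial.C (p.coeff (n - 1)) + Polynomial.C ((n : R) * p.coeff n) * Polynomial.X := by
    ext k
    rw [Polynomial.hasseDeriv_coeff]
    match k with
    | 0 =>
      simp [Nat.choose_self]
    | 1 =>
      have h1 : 1 + (n - 1) = n := by omega
      have h2 : n.choose (n - 1) = n := by
        have h3 := Nat.choose_symm (n := n) (k := 1) hn
        simp [Nat.choose_one_right] at h3
        omega
      rw [h1, h2]
      simp [Polynomial.coeff_C]
    | k + 2 =>
      rw [Polynomial.coeff_eq_zero_of_natDegree_lt (by omega)]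
      simp [Polynomial.coeff_C, Polynomial.coeff_X]
  rw [hh]
  simp
  ring

noncomputable def iota (i : Fin 2) : Polynomial ℂ →ₐ[ℂ] MvPolynomial (Fin 2) ℂ :=
  Polynomial.aeval (X i)

lemma iota_injective (i : Fin 2) : Function.Injective (iota i) := by
  have h : ∀ a : Polynomial ℂ,
      (MvPolynomial.aeval (fun k : Fin 2 => if k = i then (Polynomial.X : Polynomial ℂ) else 0))
        (iota i a) = a := by
    intro a
    have hcomp : (MvPolynomial.aeval
        (fun k : Fin 2 => if k = i then (Polynomial.X : Polynomial ℂ) else 0)).comp (iota i)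
        = AlgHom.id ℂ (Polynomial ℂ) := by
      apply Polynomial.algHom_ext
      simp [iota]
    calc (MvPolynomial.aeval
        (fun k : Fin 2 => if k = i then (Polynomial.X : Polynomial ℂ) else 0)) (iota i a)
        = ((MvPolynomial.aeval
        (fun k : Fin 2 => if k = i then (Polynomial.X : Polynomial ℂ) else 0)).comp (iota i)) a :=
          rfl
      _ = a := by rw [hcomp]; rfl
  exact Function.LeftInverse.injective h

noncomputable def Gof (g : MvPolynomial (Fin 2) ℂ) : Polynomial (Polynomial ℂ) :=
  MvPolynomial.aeval ![Polynomial.X, Polynomial.C Polynomial.X] g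

lemma eval_helper (g : MvPolynomial (Fin 2) ℂ) (i : Fin 2) (x : Fin 2 → ℂ)
    (b : MvPolynomial (Fin 2) ℂ) :
    eval x (Polynomial.eval b ((Gof g).map (iota i).toRingHom)) =
      eval ![eval x b, x i] g := by
  induction g using MvPolynomial.induction_on with
  | C a => simp [Gof, iota]
  | add p q hp hq => simp only [Gof, map_add, Polynomial.map_add, Polynomial.eval_add] at *
                     rw [hp, hq]
  | mul_X p k hp =>
      fin_cases k <;>
        simp only [Gof, map_mul, Polynomial.map_mul, Polynomial.eval_mul, MvPolynomial.aeval_X,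
          Fin.isValue, Matrix.cons_val_zero, Matrix.cons_val_one, Matrix.head_cons,
          Polynomial.map_X, Polynomial.eval_X, Polynomial.map_C, Polynomial.eval_C,
          MvPolynomial.eval_X] at * <;>
        rw [hp] <;> simp [iota]

lemma eval_iota (i : Fin 2) (x : Fin 2 → ℂ) (c : Polynomial ℂ) :
    eval x (iota i c) = c.eval (x i) := by
  induction c using Polynomial.induction_on with
  | C a => simp [iota]
  | add p q hp hq => simp only [map_add, Polynomial.eval_add, hp, hq]
  | monomial n a hn =>
      simp only [map_mul, Polynomial.eval_mul, pow_succ, ← mul_assoc] at *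
      rw [hn]
      simp [iota]

lemma key (g : MvPolynomial (Fin 2) ℂ)
    (hg : ∀ d l m : ℂ,
      eval ![d, l] g * eval ![d + l, m] g = eval ![d, m] g * eval ![d + m, l] g) :
    (Gof g).map (iota 0).toRingHom *
        Polynomial.taylor (X 0) ((Gof g).map (iota 1).toRingHom) =
      (Gof g).map (iota 1).toRingHom *
        Polynomial.taylor (X 1) ((Gof g).map (iota 0).toRingHom) := by
  apply Polynomial.funext
  intro b
  apply MvPolynomial.funext
  intro x
  simp only [Polynomial.eval_mul, map_mul, Polynomial.taylor_apply, Polynomial.eval_comp,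
    Polynomial.eval_add, Polynomial.eval_X, Polynomial.eval_C]
  rw [eval_helper, eval_helper, eval_helper, eval_helper]
  simp only [map_add, MvPolynomial.eval_X]
  exact hg (eval x b) (x 0) (x 1)

end Stmt6Aux

open Stmt6Aux in
theorem stmt6_aux_main (g : MvPolynomial (Fin 2) ℂ)
    (hg : ∀ d l m : ℂ,
      eval ![d, l] g * eval ![d + l, m] g = eval ![d, m] g * eval ![d + m, l] g) :
    ∃ p : Polynomial ℂ, ∀ d l : ℂ, eval ![d, l] g = p.eval l := by
  have hPdeg : ((Gof g).map (iota 0).toRingHom).natDegree = (Gof g).natDegree :=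
    Polynomial.natDegree_map_eq_of_injective (iota_injective 0) _
  have hQdeg : ((Gof g).map (iota 1).toRingHom).natDegree = (Gof g).natDegree :=
    Polynomial.natDegree_map_eq_of_injective (iota_injective 1) _
  have hn0 : (Gof g).natDegree = 0 := by
    by_contra hne0
    have hn : 1 ≤ (Gof g).natDegree := Nat.one_le_iff_ne_zero.mpr hne0
    have hGne : Gof g ≠ 0 := fun h0 => hne0 (by rw [h0, Polynomial.natDegree_zero])
    have hlc : (Gof g).coeff (Gof g).natDegree ≠ 0 :=
      Polynomial.leadingCoeff_ne_zero.mpr hGne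
    have hco := congrArg (fun p => p.coeff (2 * (Gof g).natDegree - 1)) (key g hg)
    rw [coeff_mul_top hn (le_of_eq hPdeg)
          (by rw [Polynomial.natDegree_taylor, hQdeg]),
        coeff_mul_top hn (le_of_eq hQdeg)
          (by rw [Polynomial.natDegree_taylor, hPdeg]),
        taylor_coeff_top (le_of_eq hQdeg), taylor_coeff_subtop hn (le_of_eq hQdeg),
        taylor_coeff_top (le_of_eq hPdeg), taylor_coeff_subtop hn (le_of_eq hPdeg)] at hco
    have hzero : ((Gof g).natDegree : MvPolynomial (Fin 2) ℂ) * ((X 0 : MvPolynomial (Fin 2) ℂ) - X 1) *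
        (((Gof g).map (iota 0).toRingHom).coeff (Gof g).natDegree *
          ((Gof g).map (iota 1).toRingHom).coeff (Gof g).natDegree) = 0 := by
      linear_combination hco
    have h1 : ((Gof g).natDegree : MvPolynomial (Fin 2) ℂ) ≠ 0 := by
      rw [← map_natCast (MvPolynomial.C : ℂ →+* MvPolynomial (Fin 2) ℂ)]
      rw [Ne, MvPolynomial.C_eq_zero, Nat.cast_eq_zero]
      omega
    have h2 : (X 0 : MvPolynomial (Fin 2) ℂ) - X 1 ≠ 0 :=
      sub_ne_zero.mpr (fun h => absurd (MvPolynomial.X_injective h) (by decide))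
    have h3 : ((Gof g).map (iota 0).toRingHom).coeff (Gof g).natDegree ≠ 0 := by
      rw [Polynomial.coeff_map]
      exact fun h => hlc (iota_injective 0 (h.trans (map_zero _).symm))
    have h4 : ((Gof g).map (iota 1).toRingHom).coeff (Gof g).natDegree ≠ 0 := by
      rw [Polynomial.coeff_map]
      exact fun h => hlc (iota_injective 1 (h.trans (map_zero _).symm))
    exact (mul_ne_zero (mul_ne_zero h1 h2) (mul_ne_zero h3 h4)) hzero
  have hC := Polynomial.eq_C_of_natDegree_eq_zero hn0
  refine ⟨(Gof g).coeff 0, fun d l => ?_⟩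
  have h1 := eval_helper g 0 ![l, 0] (MvPolynomial.C d)
  rw [hC] at h1
  simp only [Polynomial.map_C, Polynomial.eval_C, MvPolynomial.eval_C,
    Matrix.cons_val_zero, AlgHom.toRingHom_eq_coe, RingHom.coe_coe] at h1
  rw [eval_iota] at h1
  simpa using h1.symm


/-- If `g(∂,λ)` satisfies `g(∂,λ)g(∂+λ,μ) = g(∂,μ)g(∂+μ,λ)`, then
`g` does not depend on `∂`: there is `p ∈ ℂ[λ]` with `g(∂,λ) = p(λ)`.
Variable `0` is `∂`, variable `1` is `λ`. -/
theorem stmt6 (g : MvPolynomial (Fin 2) ℂ)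
    (hg : ∀ d l m : ℂ,
      eval ![d, l] g * eval ![d + l, m] g = eval ![d, m] g * eval ![d + m, l] g) :
    ∃ p : Polynomial ℂ, ∀ d l : ℂ, eval ![d, l] g = p.eval l :=
  stmt6_aux_main g hg
end

section
/- Every nontrivial conformal module over the W(2,2) Lie conformal algebra 𝒲 that is free of rank one over ℂ[∂] is isomorphic to M_{Δ,α} = ℂ[∂]v with L_λ v = (∂+α+Δλ)v and M_λ v = 0, for some Δ, α ∈ ℂ. -/
open MvPolynomial

namespace Stmt8Aux

noncomputable def ψ : MvPolynomial (Fin 2) ℂ →ₐ[ℂ] Polynomial (Polynomial ℂ) :=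
  MvPolynomial.aeval ![Polynomial.X, Polynomial.C Polynomial.X]

lemma eval_eq (h : MvPolynomial (Fin 2) ℂ) (d l : ℂ) :
    MvPolynomial.eval ![d, l] h = ((ψ h).map (Polynomial.evalRingHom l)).eval d := by
  induction h using MvPolynomial.induction_on with
  | C a => simp [ψ]
  | add p q hp hq => simp [hp, hq]
  | mul_X p i hp => fin_cases i <;> simp [ψ, hp]

lemma mv_eq_zero {h : MvPolynomial (Fin 2) ℂ}
    (H : ∀ d l : ℂ, MvPolynomial.eval ![d, l] h = 0) : h = 0 := by
  apply MvPolynomial.funext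
  intro x
  have hx : ![x 0, x 1] = x := by funext i; fin_cases i <;> rfl
  rw [map_zero, ← hx]
  exact H (x 0) (x 1)

lemma eval_aeval (v : Fin 2 → MvPolynomial (Fin 2) ℂ) (p : MvPolynomial (Fin 2) ℂ)
    (x : Fin 2 → ℂ) :
    MvPolynomial.eval x (MvPolynomial.aeval v p)
      = MvPolynomial.eval (fun i => MvPolynomial.eval x (v i)) p := by
  induction p using MvPolynomial.induction_on with
  | C a => simp
  | add p q hp hq => simp only [map_add, hp, hq]
  | mul_X p i hp => simp only [map_mul, MvPolynomial.aeval_X, MvPolynomial.eval_X, hp]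

lemma eq_of_eval_eq_off_finite {p q : Polynomial ℂ} (s : Set ℂ) (hs : s.Finite)
    (h : ∀ x ∉ s, p.eval x = q.eval x) : p = q := by
  have h0 : p - q = 0 := by
    apply Polynomial.eq_zero_of_infinite_isRoot
    have hsub : sᶜ ⊆ {x | (p - q).IsRoot x} := by
      intro x hx
      simp only [Set.mem_setOf_eq, Polynomial.IsRoot, Polynomial.eval_sub]
      rw [h x hx, sub_self]
    exact hs.infinite_compl.mono hsub
  exact sub_eq_zero.mp h0

lemma eq_zero_of_eval_zero_off_finite (p : Polynomial ℂ) (s : Set ℂ) (hs : s.Finite)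
    (h : ∀ x ∉ s, p.eval x = 0) : p = 0 :=
  eq_of_eval_eq_off_finite s hs (by simpa using h)

lemma exists_nonroot_notmem (a : Polynomial ℂ) (ha : a ≠ 0) (s : Set ℂ) (hs : s.Finite) :
    ∃ x, a.eval x ≠ 0 ∧ x ∉ s := by
  have h1 : ({x | a.IsRoot x} ∪ s).Finite := (Polynomial.finite_setOf_isRoot ha).union hs
  obtain ⟨x, hx⟩ := h1.infinite_compl.nonempty
  simp only [Set.mem_compl_iff, Set.mem_union, Set.mem_setOf_eq, not_or] at hx
  exact ⟨x, hx.1, hx.2⟩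

lemma coeff_mul_top {A B : Polynomial ℂ} {k : ℕ} (hA : A.natDegree ≤ k + 1)
    (hB : B.natDegree ≤ k + 1) :
    (A * B).coeff (2 * k + 1) =
      A.coeff (k + 1) * B.coeff k + A.coeff k * B.coeff (k + 1) := by
  rw [Polynomial.coeff_mul, Finset.Nat.sum_antidiagonal_eq_sum_range_succ_mk]
  have hsub : ({k, k + 1} : Finset ℕ) ⊆ Finset.range (2 * k + 1 + 1) := by
    intro i hi
    simp only [Finset.mem_insert, Finset.mem_singleton] at hi
    rcases hi with h | h <;> simp [h] <;> omega
  have key : ∀ i ∈ Finset.range (2 * k + 1 + 1), i ∉ ({k, k + 1} : Finset ℕ) →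
      A.coeff i * B.coeff (2 * k + 1 - i) = 0 := by
    intro i _ hi
    simp only [Finset.mem_insert, Finset.mem_singleton, not_or] at hi
    rcases lt_or_ge i k with h | h
    · have h2 : k + 1 < 2 * k + 1 - i := by omega
      rw [Polynomial.coeff_eq_zero_of_natDegree_lt (lt_of_le_of_lt hB h2), mul_zero]
    · have h2 : k + 1 < i := by omega
      rw [Polynomial.coeff_eq_zero_of_natDegree_lt (lt_of_le_of_lt hA h2), zero_mul]
  rw [← Finset.sum_subset hsub key]
  rw [Finset.sum_insert (by simp), Finset.sum_singleton]
  have e1 : 2 * k + 1 - k = k + 1 := by omega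
  have e2 : 2 * k + 1 - (k + 1) = k := by omega
  rw [e1, e2]
  ring

lemma taylor_coeff_top {A : Polynomial ℂ} {k : ℕ} (hA : A.natDegree ≤ k + 1) (l : ℂ) :
    (Polynomial.taylor l A).coeff (k + 1) = A.coeff (k + 1) := by
  rw [Polynomial.taylor_coeff]
  have h1 : (Polynomial.hasseDeriv (k + 1) A).natDegree ≤ 0 :=
    le_trans (Polynomial.natDegree_hasseDeriv_le _ _) (by omega)
  rw [Polynomial.eq_C_of_natDegree_le_zero h1, Polynomial.eval_C, Polynomial.hasseDeriv_coeff]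
  simp

lemma taylor_coeff_sub1 {A : Polynomial ℂ} {k : ℕ} (hA : A.natDegree ≤ k + 1) (l : ℂ) :
    (Polynomial.taylor l A).coeff k = A.coeff k + (k + 1 : ℂ) * l * A.coeff (k + 1) := by
  rw [Polynomial.taylor_coeff]
  have h1 : (Polynomial.hasseDeriv k A).natDegree ≤ 1 :=
    le_trans (Polynomial.natDegree_hasseDeriv_le _ _) (by omega)
  rw [Polynomial.eq_X_add_C_of_natDegree_le_one h1]
  simp only [Polynomial.eval_add, Polynomial.eval_mul, Polynomial.eval_C, Polynomial.eval_X,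
    Polynomial.hasseDeriv_coeff]
  rw [Nat.add_comm 1 k, Nat.choose_succ_self_right]
  simp
  ring

lemma coeff_X_add_C_mul (β : ℂ) (A : Polynomial ℂ) (k : ℕ) :
    ((Polynomial.X + Polynomial.C β) * A).coeff (k + 1)
      = A.coeff k + β * A.coeff (k + 1) := by
  rw [add_mul, Polynomial.coeff_add, Polynomial.coeff_X_mul, Polynomial.coeff_C_mul]

lemma coeff_comp_C_mul_X (p : Polynomial ℂ) (c : ℂ) (k : ℕ) :
    (p.comp (Polynomial.C c * Polynomial.X)).coeff k = c ^ k * p.coeff k := by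
  induction p using Polynomial.induction_on' with
  | add p q hp hq => simp [hp, hq, mul_add]
  | monomial n r =>
    have h1 : (Polynomial.monomial n r).comp (Polynomial.C c * Polynomial.X)
        = Polynomial.C (r * c ^ n) * Polynomial.X ^ n := by
      rw [← Polynomial.C_mul_X_pow_eq_monomial, Polynomial.mul_comp, Polynomial.C_comp,
        Polynomial.pow_comp, Polynomial.X_comp]
      rw [mul_pow, ← Polynomial.C_pow, ← mul_assoc, ← Polynomial.C_mul]
    rw [h1, Polynomial.coeff_C_mul, Polynomial.coeff_X_pow, Polynomial.coeff_monomial]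
    rcases eq_or_ne n k with h | h
    · subst h; simp [mul_comm]
    · simp [h, Ne.symm h]

lemma nat_ineq (j : ℕ) (hj : 2 ≤ j) : 2 * 2 ^ j < 1 + 3 ^ j := by
  induction j with
  | zero => omega
  | succ n ih =>
    rcases Nat.lt_or_ge n 2 with h | h
    · interval_cases n
      · omega
      · norm_num
    · have ih' := ih h
      have h3 : 1 ≤ 3 ^ n := Nat.one_le_pow _ _ (by norm_num)
      rw [pow_succ, pow_succ]
      linarith

lemma complex_ne (j : ℕ) (hj : 2 ≤ j) : (1 : ℂ) + 3 ^ j - 2 * 2 ^ j ≠ 0 := by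
  intro h
  have h1 : ((1 + 3 ^ j : ℕ) : ℂ) = ((2 * 2 ^ j : ℕ) : ℂ) := by
    push_cast
    linear_combination h
  have h2 : 1 + 3 ^ j = 2 * 2 ^ j := Nat.cast_injective h1
  exact absurd h2.symm (Nat.ne_of_lt (nat_ineq j hj))

end Stmt8Aux


/-- every nontrivial conformal module over the W(2,2) Lie
conformal algebra `𝒲` that is free of rank one over `ℂ[∂]`, say `V = ℂ[∂]v`
with `L_λ v = f(∂,λ)v` and `M_λ v = g(∂,λ)v`, is of the form `M_{Δ,α}`:
`L_λ v = (∂+α+Δλ)v`, `M_λ v = 0`.  The module axioms are equivalent to the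
hypotheses `hLL, hLM, hMM` below (variable `0` is `∂`, variable `1` is `λ`),
and nontriviality means that the action of `𝒲` is not identically zero. -/
theorem stmt8 (f g : MvPolynomial (Fin 2) ℂ)
    (hLL : ∀ d l m : ℂ,
      eval ![d + l, m] f * eval ![d, l] f - eval ![d + m, l] f * eval ![d, m] f
        = (l - m) * eval ![d, l + m] f)
    (hLM : ∀ d l m : ℂ,
      eval ![d + l, m] g * eval ![d, l] f - eval ![d + m, l] f * eval ![d, m] g
        = (l - m) * eval ![d, l + m] g)
    (hMM : ∀ d l m : ℂ,
      eval ![d + l, m] g * eval ![d, l] g = eval ![d + m, l] g * eval ![d, m] g)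
    (hnt : ¬(f = 0 ∧ g = 0)) :
    ∃ Δ α : ℂ, (∀ d l : ℂ, eval ![d, l] f = d + α + Δ * l) ∧ g = 0 := by
  classical
  by_cases hf : f = 0
  · exfalso
    apply hnt
    refine ⟨hf, Stmt8Aux.mv_eq_zero ?_⟩
    intro d s
    have h1 := hLM d s 0
    have h2 := hLM d (s + 1) (-1)
    rw [hf] at h1 h2
    simp only [map_zero, mul_zero, zero_mul, sub_zero, zero_sub, add_zero, neg_zero] at h1 h2
    have e : s + 1 + (-1) = s := by ring
    rw [e] at h2
    rcases eq_or_ne s 0 with hs | hs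
    · have h2' : (s + 1 - -1) ≠ 0 := by rw [hs]; norm_num
      exact (mul_eq_zero.mp h2.symm).resolve_left h2'
    · exact (mul_eq_zero.mp h1.symm).resolve_left hs
  · -- main branch : f ≠ 0
    set P := Stmt8Aux.ψ f with hPdef
    have hF : ∀ d l : ℂ, eval ![d, l] f = (P.map (Polynomial.evalRingHom l)).eval d :=
      fun d l => Stmt8Aux.eval_eq f d l
    -- Step 1 : F(d+l,0) = F(d,0) + l
    have hu : ∀ d l : ℂ, eval ![d + l, 0] f = eval ![d, 0] f + l := by
      set u : MvPolynomial (Fin 2) ℂ :=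
        (MvPolynomial.aeval ![(X 0 : MvPolynomial (Fin 2) ℂ) + X 1, 0]) f
          - (MvPolynomial.aeval ![(X 0 : MvPolynomial (Fin 2) ℂ), 0]) f - X 1 with hudef
      have hueval : ∀ d l : ℂ,
          eval ![d, l] u = eval ![d + l, 0] f - eval ![d, 0] f - l := by
        intro d l
        have e1 : eval ![d, l] ((MvPolynomial.aeval ![(X 0 : MvPolynomial (Fin 2) ℂ) + X 1, 0]) f)
            = eval ![d + l, 0] f := by
          have hv : (fun i => eval ![d, l] ((![(X 0 : MvPolynomial (Fin 2) ℂ) + X 1, 0]) i))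
              = ![d + l, 0] := by funext i; fin_cases i <;> simp
          rw [Stmt8Aux.eval_aeval, hv]
        have e2 : eval ![d, l] ((MvPolynomial.aeval ![(X 0 : MvPolynomial (Fin 2) ℂ), 0]) f)
            = eval ![d, 0] f := by
          have hv : (fun i => eval ![d, l] ((![(X 0 : MvPolynomial (Fin 2) ℂ), 0]) i))
              = ![d, 0] := by funext i; fin_cases i <;> simp
          rw [Stmt8Aux.eval_aeval, hv]
        rw [hudef]
        simp only [map_sub, e1, e2, MvPolynomial.eval_X]
        rfl
      have hprod : f * u = 0 := by
        apply Stmt8Aux.mv_eq_zero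
        intro d l
        rw [map_mul, hueval]
        have h := hLL d l 0
        simp only [add_zero, sub_zero] at h
        linear_combination h
      rcases mul_eq_zero.mp hprod with h | h
      · exact absurd h hf
      · intro d l
        have := hueval d l
        rw [h, map_zero] at this
        linear_combination -this
    -- Step 2 : boundary value F(d,0) = d + α₀, and P ≠ 0
    have halpha : ∀ d : ℂ, eval ![d, 0] f = d + eval ![0, 0] f := by
      intro d
      have := hu 0 d
      rw [zero_add] at this
      linear_combination this
    have hPne : P ≠ 0 := by
      intro h
      apply hf
      apply Stmt8Aux.mv_eq_zero
      intro d l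
      rw [hF d l, h]
      simp
    have hA0 : P.map (Polynomial.evalRingHom 0) = Polynomial.X + Polynomial.C (eval ![0, 0] f) := by
      apply Polynomial.funext
      intro d
      rw [← hF d 0, halpha d]
      simp
    have hn1 : 1 ≤ P.natDegree := by
      have h1 : (P.map (Polynomial.evalRingHom 0)).natDegree = 1 := by
        rw [hA0]; exact Polynomial.natDegree_X_add_C _
      calc 1 = (P.map (Polynomial.evalRingHom 0)).natDegree := h1.symm
        _ ≤ P.natDegree := Polynomial.natDegree_map_le
    obtain ⟨k, hk⟩ : ∃ k, P.natDegree = k + 1 := ⟨P.natDegree - 1, by omega⟩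
    have hAdeg : ∀ l : ℂ, (P.map (Polynomial.evalRingHom l)).natDegree ≤ k + 1 :=
      fun l => hk ▸ Polynomial.natDegree_map_le
    have hAco : ∀ (l : ℂ) (j : ℕ),
        (P.map (Polynomial.evalRingHom l)).coeff j = (P.coeff j).eval l := by
      intro l j
      simp [Polynomial.coeff_map]
    -- Step 3 : polynomial identity in d for each fixed l, m
    have E1 : ∀ l m : ℂ,
        (Polynomial.taylor l (P.map (Polynomial.evalRingHom m)))
            * (P.map (Polynomial.evalRingHom l))
          - (Polynomial.taylor m (P.map (Polynomial.evalRingHom l)))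
            * (P.map (Polynomial.evalRingHom m))
        = Polynomial.C (l - m) * (P.map (Polynomial.evalRingHom (l + m))) := by
      intro l m
      apply Polynomial.funext
      intro d
      have h := hLL d l m
      simp only [hF] at h
      simp only [Polynomial.eval_sub, Polynomial.eval_mul, Polynomial.eval_C,
        Polynomial.taylor_eval]
      linear_combination h
    -- Step 4 : top-coefficient identity
    have hcoef : ∀ l m : ℂ,
        ((k : ℂ) + 1) * (l - m) * ((P.coeff (k + 1)).eval l * (P.coeff (k + 1)).eval m)
          = (l - m) * ((P.coeff (2 * k + 1)).eval (l + m)) := by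
      intro l m
      have h := congrArg (fun p => Polynomial.coeff p (2 * k + 1)) (E1 l m)
      simp only [Polynomial.coeff_sub, Polynomial.coeff_C_mul] at h
      rw [Stmt8Aux.coeff_mul_top (by rw [Polynomial.natDegree_taylor]; exact hAdeg m) (hAdeg l),
        Stmt8Aux.coeff_mul_top (by rw [Polynomial.natDegree_taylor]; exact hAdeg l) (hAdeg m),
        Stmt8Aux.taylor_coeff_top (hAdeg m) l, Stmt8Aux.taylor_coeff_sub1 (hAdeg m) l,
        Stmt8Aux.taylor_coeff_top (hAdeg l) m, Stmt8Aux.taylor_coeff_sub1 (hAdeg l) m] at h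
      simp only [hAco] at h
      linear_combination h
    have ha : P.coeff (k + 1) ≠ 0 := by
      have h1 := Polynomial.leadingCoeff_ne_zero.mpr hPne
      rwa [Polynomial.leadingCoeff, hk] at h1
    -- Step 5 : k = 0
    have hk0 : k = 0 := by
      by_contra hkne
      have h2 : P.coeff (2 * k + 1) = 0 :=
        Polynomial.coeff_eq_zero_of_natDegree_lt (by omega)
      obtain ⟨l, hl, -⟩ := Stmt8Aux.exists_nonroot_notmem _ ha ∅ Set.finite_empty
      obtain ⟨m, hm, hmne⟩ :=
        Stmt8Aux.exists_nonroot_notmem _ ha {l} (Set.finite_singleton l)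
      have h3 := hcoef l m
      rw [h2] at h3
      simp only [Polynomial.eval_zero, mul_zero] at h3
      have hne : ((k : ℂ) + 1) * (l - m) * ((P.coeff (k + 1)).eval l * (P.coeff (k + 1)).eval m)
          ≠ 0 := by
        apply mul_ne_zero (mul_ne_zero ?_ ?_) (mul_ne_zero hl hm)
        · exact Nat.cast_add_one_ne_zero k
        · rw [sub_ne_zero]
          intro hlm
          exact hmne (by simp [hlm])
      exact hne h3
    subst hk0
    norm_num at hcoef ha hk hAdeg
    -- Step 6 : the leading λ-coefficient is the constant 1
    have hmul : ∀ l m : ℂ, m ≠ l →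
        (P.coeff 1).eval l * (P.coeff 1).eval m = (P.coeff 1).eval (l + m) := by
      intro l m hne
      have hlm : l - m ≠ 0 := sub_ne_zero.mpr (Ne.symm hne)
      exact (hcoef l m).resolve_right hlm
    have haa : ∀ l m : ℂ,
        (P.coeff 1).eval l * (P.coeff 1).eval m = (P.coeff 1).eval (l + m) := by
      intro l m₀
      have hpoly : Polynomial.C ((P.coeff 1).eval l) * P.coeff 1
          = Polynomial.taylor l (P.coeff 1) := by
        apply Stmt8Aux.eq_of_eval_eq_off_finite {l} (Set.finite_singleton l)
        intro m hm
        rw [Polynomial.eval_mul, Polynomial.eval_C, Polynomial.taylor_eval]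
        rw [hmul l m (by simpa using hm), add_comm]
      have hthis := congrArg (Polynomial.eval m₀) hpoly
      rw [Polynomial.eval_mul, Polynomial.eval_C, Polynomial.taylor_eval] at hthis
      rw [hthis, add_comm]
    have ha0 : (P.coeff 1).eval 0 = 1 := by
      by_contra h
      apply ha
      apply Stmt8Aux.eq_zero_of_eval_zero_off_finite _ ∅ Set.finite_empty
      intro x _
      have hx := haa x 0
      rw [add_zero] at hx
      have h2 : (P.coeff 1).eval x * ((P.coeff 1).eval 0 - 1) = 0 := by linear_combination hx
      rcases mul_eq_zero.mp h2 with h1 | h1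
      · exact h1
      · exact absurd (by linear_combination h1) h
    have hadeg : (P.coeff 1).natDegree = 0 := by
      by_contra hd
      have hcomp : P.coeff 1 * P.coeff 1
          = (P.coeff 1).comp (Polynomial.C 2 * Polynomial.X) := by
        apply Polynomial.funext
        intro x
        rw [Polynomial.eval_mul, Polynomial.eval_comp]
        simp only [Polynomial.eval_mul, Polynomial.eval_C, Polynomial.eval_X]
        rw [haa x x, two_mul]
      have h1 : (P.coeff 1 * P.coeff 1).natDegree = 2 * (P.coeff 1).natDegree := by
        rw [Polynomial.natDegree_mul ha ha]; ring
      have h2 : ((P.coeff 1).comp (Polynomial.C 2 * Polynomial.X)).natDegree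
          = (P.coeff 1).natDegree := by
        rw [Polynomial.natDegree_comp, Polynomial.natDegree_C_mul_X _ two_ne_zero, mul_one]
      rw [hcomp, h2] at h1
      omega
    have haC : P.coeff 1 = Polynomial.C 1 := by
      have h1 := Polynomial.eq_C_of_natDegree_le_zero hadeg.le
      rw [h1]
      congr 1
      rw [Polynomial.coeff_zero_eq_eval_zero]
      exact ha0
    -- Step 7 : P = X + C b with b = P.coeff 0
    have hPeq : P = Polynomial.X + Polynomial.C (P.coeff 0) := by
      have h := Polynomial.eq_X_add_C_of_natDegree_le_one (le_of_eq hk)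
      rw [haC] at h
      simpa using h
    have hFb : ∀ d l : ℂ, eval ![d, l] f = d + (P.coeff 0).eval l := by
      intro d l
      rw [hF d l, hPeq]
      simp
    -- Step 8 : b is affine
    have hb : ∀ l m : ℂ, l * (P.coeff 0).eval l - m * (P.coeff 0).eval m
        = (l - m) * (P.coeff 0).eval (l + m) := by
      intro l m
      have h := hLL 0 l m
      simp only [hFb, zero_add] at h
      linear_combination h
    have hb3 : P.coeff 0 + (P.coeff 0).comp (Polynomial.C 3 * Polynomial.X)
        = Polynomial.C 2 * (P.coeff 0).comp (Polynomial.C 2 * Polynomial.X) := by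
      apply Stmt8Aux.eq_of_eval_eq_off_finite {0} (Set.finite_singleton 0)
      intro l hl
      have hlne : l ≠ 0 := by simpa using hl
      have h := hb l (2 * l)
      have e : l + 2 * l = 3 * l := by ring
      rw [e] at h
      simp only [Polynomial.eval_add, Polynomial.eval_mul, Polynomial.eval_comp,
        Polynomial.eval_C, Polynomial.eval_X]
      have h2 : l * ((P.coeff 0).eval l + (P.coeff 0).eval (3 * l)
          - 2 * (P.coeff 0).eval (2 * l)) = 0 := by linear_combination h
      have h3 := (mul_eq_zero.mp h2).resolve_left hlne
      linear_combination h3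
    have hbcoef : ∀ j, 2 ≤ j → (P.coeff 0).coeff j = 0 := by
      intro j hj
      have h := congrArg (fun p => Polynomial.coeff p j) hb3
      simp only [Polynomial.coeff_add, Polynomial.coeff_C_mul,
        Stmt8Aux.coeff_comp_C_mul_X] at h
      have h2 : ((1 : ℂ) + 3 ^ j - 2 * 2 ^ j) * (P.coeff 0).coeff j = 0 := by
        linear_combination h
      exact (mul_eq_zero.mp h2).resolve_left (Stmt8Aux.complex_ne j hj)
    have hbdeg : (P.coeff 0).natDegree ≤ 1 :=
      Polynomial.natDegree_le_iff_coeff_eq_zero.mpr fun N hN => hbcoef N (by omega)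
    have hFval : ∀ d l : ℂ,
        eval ![d, l] f = d + (P.coeff 0).coeff 0 + (P.coeff 0).coeff 1 * l := by
      intro d l
      rw [hFb d l]
      conv_lhs => rw [Polynomial.eq_X_add_C_of_natDegree_le_one hbdeg]
      simp
      ring
    -- Step 9 : g = 0
    have hg0 : g = 0 := by
      by_contra hg
      set Q := Stmt8Aux.ψ g with hQdef
      have hG : ∀ d l : ℂ, eval ![d, l] g = (Q.map (Polynomial.evalRingHom l)).eval d :=
        fun d l => Stmt8Aux.eval_eq g d l
      have hQne : Q ≠ 0 := by
        intro h
        apply hg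
        apply Stmt8Aux.mv_eq_zero
        intro d l
        rw [hG d l, h]
        simp
      have hBco : ∀ (l : ℂ) (j : ℕ),
          (Q.map (Polynomial.evalRingHom l)).coeff j = (Q.coeff j).eval l := by
        intro l j; simp [Polynomial.coeff_map]
      have E2 : ∀ l m : ℂ,
          (Polynomial.X + Polynomial.C ((P.coeff 0).coeff 0 + (P.coeff 0).coeff 1 * l))
              * Polynomial.taylor l (Q.map (Polynomial.evalRingHom m))
            - (Polynomial.X + Polynomial.C (m + (P.coeff 0).coeff 0 + (P.coeff 0).coeff 1 * l))
              * (Q.map (Polynomial.evalRingHom m))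
          = Polynomial.C (l - m) * (Q.map (Polynomial.evalRingHom (l + m))) := by
        intro l m
        apply Polynomial.funext
        intro d
        have h := hLM d l m
        simp only [hFval, hG] at h
        simp only [Polynomial.eval_sub, Polynomial.eval_mul, Polynomial.eval_add,
          Polynomial.eval_C, Polynomial.eval_X, Polynomial.taylor_eval]
        linear_combination h
      rcases Nat.eq_zero_or_pos Q.natDegree with hp0 | hppos
      · -- constant (in ∂) case
        have hQC := Polynomial.eq_C_of_natDegree_le_zero (le_of_eq hp0)
        have hcz : ∀ m : ℂ, m * (Q.coeff 0).eval m = 0 := by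
          intro m
          have h := hLM 0 m m
          simp only [hFval, hG] at h
          rw [hQC] at h
          simp only [Polynomial.map_C, Polynomial.eval_C, sub_self, zero_mul,
            Polynomial.coe_evalRingHom] at h
          linear_combination -h
        apply hQne
        rw [hQC]
        have hz : Q.coeff 0 = 0 := by
          apply Stmt8Aux.eq_zero_of_eval_zero_off_finite _ {0} (Set.finite_singleton 0)
          intro x hx
          have hxne : x ≠ 0 := by simpa using hx
          exact (mul_eq_zero.mp (hcz x)).resolve_left hxne
        rw [hz, map_zero]
      · obtain ⟨k', hk'⟩ : ∃ k', Q.natDegree = k' + 1 := ⟨Q.natDegree - 1, by omega⟩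
        have hBdeg : ∀ l : ℂ, (Q.map (Polynomial.evalRingHom l)).natDegree ≤ k' + 1 :=
          fun l => hk' ▸ Polynomial.natDegree_map_le
        have hcne : Q.coeff (k' + 1) ≠ 0 := by
          have h1 := Polynomial.leadingCoeff_ne_zero.mpr hQne
          rwa [Polynomial.leadingCoeff, hk'] at h1
        have hc : ∀ l m : ℂ, (Q.coeff (k' + 1)).eval m * (((k' : ℂ) + 1) * l - m)
            = (l - m) * (Q.coeff (k' + 1)).eval (l + m) := by
          intro l m
          have h := congrArg (fun p => Polynomial.coeff p (k' + 1)) (E2 l m)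
          simp only [Polynomial.coeff_sub, Polynomial.coeff_C_mul] at h
          rw [Stmt8Aux.coeff_X_add_C_mul, Stmt8Aux.coeff_X_add_C_mul,
            Stmt8Aux.taylor_coeff_top (hBdeg m) l,
            Stmt8Aux.taylor_coeff_sub1 (hBdeg m) l] at h
          simp only [hBco] at h
          linear_combination h
        have hk'0 : k' = 0 := by
          by_contra hkne
          apply hcne
          apply Stmt8Aux.eq_zero_of_eval_zero_off_finite _ {0} (Set.finite_singleton 0)
          intro m hm
          have hmne : m ≠ 0 := by simpa using hm
          have h := hc m m
          rw [sub_self, zero_mul] at h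
          rcases mul_eq_zero.mp h with h' | h'
          · exact h'
          · exfalso
            have h'' : (k' : ℂ) * m = 0 := by linear_combination h'
            rcases mul_eq_zero.mp h'' with h3 | h3
            · exact hkne (by exact_mod_cast h3)
            · exact hmne h3
        subst hk'0
        norm_num at hc hcne hk' hBdeg
        -- the leading coefficient of g is a nonzero constant κ
        have hcC : Q.coeff 1 = Polynomial.C ((Q.coeff 1).eval 0) := by
          apply Stmt8Aux.eq_of_eval_eq_off_finite {0} (Set.finite_singleton 0)
          intro x hx
          have hxne : x ≠ 0 := by simpa using hx
          have h := hc x 0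
          rw [add_zero, sub_zero] at h
          rw [Polynomial.eval_C]
          have h2 : x * ((Q.coeff 1).eval x) = x * ((Q.coeff 1).eval 0) := by
            linear_combination -h
          exact mul_left_cancel₀ hxne h2
        have hκ : (Q.coeff 1).eval 0 ≠ 0 := by
          intro h
          apply hcne
          rw [hcC, h, map_zero]
        have hQeq : Q = Polynomial.C (Q.coeff 1) * Polynomial.X + Polynomial.C (Q.coeff 0) :=
          Polynomial.eq_X_add_C_of_natDegree_le_one (le_of_eq hk')
        have hGval : ∀ d m : ℂ, eval ![d, m] g
            = (Q.coeff 1).eval 0 * d + (Q.coeff 0).eval m := by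
          intro d m
          rw [hG d m]
          conv_lhs => rw [hQeq, hcC]
          simp [Polynomial.coe_evalRingHom]
        have he : Q.coeff 0 = Polynomial.C ((Q.coeff 1).eval 0 * (P.coeff 0).coeff 0)
            + Polynomial.C ((Q.coeff 1).eval 0 * (P.coeff 0).coeff 1) * Polynomial.X := by
          apply Stmt8Aux.eq_of_eval_eq_off_finite {0} (Set.finite_singleton 0)
          intro x hx
          have hxne : x ≠ 0 := by simpa using hx
          have h := hLM 0 x 0
          simp only [hFval, hGval] at h
          simp only [add_zero, zero_add, sub_zero, mul_zero] at h
          simp only [Polynomial.eval_add, Polynomial.eval_mul, Polynomial.eval_C,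
            Polynomial.eval_X]
          have h2 : x * ((Q.coeff 0).eval x)
              = x * ((Q.coeff 1).eval 0 * (P.coeff 0).coeff 0
                + (Q.coeff 1).eval 0 * (P.coeff 0).coeff 1 * x) := by
            linear_combination -h
          exact mul_left_cancel₀ hxne h2
        have hGfull : ∀ d m : ℂ, eval ![d, m] g
            = (Q.coeff 1).eval 0
              * (d + (P.coeff 0).coeff 0 + (P.coeff 0).coeff 1 * m) := by
          intro d m
          rw [hGval d m, he]
          simp only [Polynomial.eval_add, Polynomial.eval_mul, Polynomial.eval_C,
            Polynomial.eval_X]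
          ring
        have h1 := hMM (-(P.coeff 0).coeff 0) 1 0
        have h2 := hMM (1 - (P.coeff 0).coeff 0) 1 0
        simp only [hGfull] at h1 h2
        have hA : ((Q.coeff 1).eval 0) ^ 2 * (P.coeff 0).coeff 1 = 0 := by
          linear_combination h1
        have hB : ((Q.coeff 1).eval 0) ^ 2 * (1 + (P.coeff 0).coeff 1) = 0 := by
          linear_combination h2
        have hsq : ((Q.coeff 1).eval 0) ^ 2 = 0 := by linear_combination hB - hA
        exact hκ ((pow_eq_zero_iff (two_ne_zero)).mp hsq)
    exact ⟨(P.coeff 0).coeff 1, (P.coeff 0).coeff 0, hFval, hg0⟩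
end

section
/- Let γ ∈ ℂ[λ₁,λ₂,λ₃] be skew-symmetric in λ₂,λ₃, homogeneous of degree 3, and satisfy (λ₁−λ₂)γ(0,λ₃,λ₁+λ₂) − (λ₁−λ₃)γ(0,λ₂,λ₁+λ₃) − (λ₁+λ₂+λ₃)γ(λ₁,λ₂,λ₃) = 0. Then γ(λ₁,λ₂,λ₃) = c·(λ₂−λ₃)(λ₁+λ₂+λ₃)(−λ₁+λ₂+λ₃) for some constant c ∈ ℂ. -/
open MvPolynomial

private noncomputable def dd (i j k : ℕ) : Fin 3 →₀ ℕ := Finsupp.equivFunOnFinite.symm ![i, j, k]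

private lemma dd_eq_iff {i j k i' j' k' : ℕ} :
    dd i j k = dd i' j' k' ↔ (i = i' ∧ j = j' ∧ k = k') := by
  constructor
  · intro he
    have h0 := DFunLike.congr_fun he 0
    have h1 := DFunLike.congr_fun he 1
    have h2 := DFunLike.congr_fun he 2
    simp [dd] at h0 h1 h2
    exact ⟨h0, h1, h2⟩
  · rintro ⟨rfl, rfl, rfl⟩
    rfl

private lemma expand3 (γ : MvPolynomial (Fin 3) ℂ) (hhom : γ.IsHomogeneous 3)
    (l₁ l₂ l₃ : ℂ) :
    eval ![l₁, l₂, l₃] γ =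
      coeff (dd 3 0 0) γ * l₁ ^ 3 + coeff (dd 2 1 0) γ * (l₁ ^ 2 * l₂)
      + coeff (dd 2 0 1) γ * (l₁ ^ 2 * l₃) + coeff (dd 1 2 0) γ * (l₁ * l₂ ^ 2)
      + coeff (dd 1 1 1) γ * (l₁ * l₂ * l₃) + coeff (dd 1 0 2) γ * (l₁ * l₃ ^ 2)
      + coeff (dd 0 3 0) γ * l₂ ^ 3 + coeff (dd 0 2 1) γ * (l₂ ^ 2 * l₃)
      + coeff (dd 0 1 2) γ * (l₂ * l₃ ^ 2) + coeff (dd 0 0 3) γ * l₃ ^ 3 := by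
  have hsub : γ.support ⊆ ({dd 3 0 0, dd 2 1 0, dd 2 0 1, dd 1 2 0, dd 1 1 1, dd 1 0 2,
      dd 0 3 0, dd 0 2 1, dd 0 1 2, dd 0 0 3} : Finset (Fin 3 →₀ ℕ)) := by
    intro d hd
    have hc : coeff d γ ≠ 0 := mem_support_iff.mp hd
    have hdeg : d.degree = 3 := by
      by_contra h
      exact hc (hhom.coeff_eq_zero h)
    have hsum : d 0 + d 1 + d 2 = 3 := by
      have h1 : ∑ i : Fin 3, d i = ∑ i ∈ d.support, d i := by
        refine (Finset.sum_subset (Finset.subset_univ _) ?_).symm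
        intro x _ hx
        exact Finsupp.notMem_support_iff.mp hx
      have hdeg' : ∑ i ∈ d.support, d i = 3 := hdeg
      rw [← h1] at hdeg'
      rw [Fin.sum_univ_three] at hdeg'
      exact hdeg'
    have hd' : d = dd (d 0) (d 1) (d 2) := by
      ext i
      fin_cases i <;> simp [dd]
    simp only [Finset.mem_insert, Finset.mem_singleton]
    rw [hd']
    simp only [dd_eq_iff]
    clear hd' hdeg hc hd
    generalize d 0 = a at hsum ⊢
    generalize d 1 = b at hsum ⊢
    generalize d 2 = c at hsum ⊢
    have ha : a ≤ 3 := by omega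
    have hb : b ≤ 3 := by omega
    have hcc : c ≤ 3 := by omega
    interval_cases a <;> interval_cases b <;> interval_cases c <;> simp_all
  have hprod : ∀ i j k : ℕ,
      (∏ t : Fin 3, (![l₁, l₂, l₃]) t ^ (dd i j k) t) = l₁ ^ i * l₂ ^ j * l₃ ^ k := by
    intro i j k
    rw [Fin.prod_univ_three]
    simp [dd]
  rw [eval_eq']
  rw [Finset.sum_subset hsub (fun d _ hd => by
    rw [MvPolynomial.notMem_support_iff.mp hd, zero_mul])]
  rw [Finset.sum_insert (by simp [dd_eq_iff]), Finset.sum_insert (by simp [dd_eq_iff]),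
    Finset.sum_insert (by simp [dd_eq_iff]), Finset.sum_insert (by simp [dd_eq_iff]),
    Finset.sum_insert (by simp [dd_eq_iff]), Finset.sum_insert (by simp [dd_eq_iff]),
    Finset.sum_insert (by simp [dd_eq_iff]), Finset.sum_insert (by simp [dd_eq_iff]),
    Finset.sum_insert (by simp [dd_eq_iff]), Finset.sum_singleton]
  rw [hprod, hprod, hprod, hprod, hprod, hprod, hprod, hprod, hprod, hprod]
  ring

/-- a homogeneous degree-3 polynomial `γ(λ₁,λ₂,λ₃)`,
skew-symmetric in `λ₂,λ₃`, satisfying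
`(λ₁−λ₂)γ(0,λ₃,λ₁+λ₂) − (λ₁−λ₃)γ(0,λ₂,λ₁+λ₃) − (λ₁+λ₂+λ₃)γ(λ₁,λ₂,λ₃) = 0`,
equals `c·(λ₂−λ₃)(λ₁+λ₂+λ₃)(−λ₁+λ₂+λ₃)` for some constant `c`. -/
theorem stmt9 (γ : MvPolynomial (Fin 3) ℂ)
    (hskew : ∀ l₁ l₂ l₃ : ℂ, eval ![l₁, l₂, l₃] γ = -eval ![l₁, l₃, l₂] γ)
    (hhom : γ.IsHomogeneous 3)
    (heq : ∀ l₁ l₂ l₃ : ℂ,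
      (l₁ - l₂) * eval ![0, l₃, l₁ + l₂] γ - (l₁ - l₃) * eval ![0, l₂, l₁ + l₃] γ
        - (l₁ + l₂ + l₃) * eval ![l₁, l₂, l₃] γ = 0) :
    ∃ c : ℂ, ∀ l₁ l₂ l₃ : ℂ,
      eval ![l₁, l₂, l₃] γ
        = c * (l₂ - l₃) * (l₁ + l₂ + l₃) * (-l₁ + l₂ + l₃) := by
  refine ⟨coeff (dd 0 3 0) γ, fun l₁ l₂ l₃ => ?_⟩
  have E := expand3 γ hhom
  have S1 := hskew 1 0 0
  have S2 := hskew 0 1 0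
  have S3 := hskew 1 1 0
  have S4 := hskew 0 1 1
  have S5 := hskew 1 1 1
  have S6 := hskew 1 2 0
  have H1 := heq 1 1 0
  have H2 := heq 1 2 0
  have H3 := heq 2 1 0
  simp only [E] at S1 S2 S3 S4 S5 S6 H1 H2 H3 ⊢
  linear_combination
    (((-5 : ℂ)/2) * l₁^2*l₂ + ((5 : ℂ)/2) * l₁^2*l₃ + (2 : ℂ) * l₁*l₂^2 + (-2 : ℂ) * l₁*l₃^2 + ((-9 : ℂ)/2) * l₂^2*l₃ + ((9 : ℂ)/2) * l₂*l₃^2) * H1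
    + (((1 : ℂ)/3) * l₁^2*l₂ + ((-1 : ℂ)/3) * l₁^2*l₃ + ((-1 : ℂ)/3) * l₁*l₂^2 + ((1 : ℂ)/3) * l₁*l₃^2 + ((1 : ℂ)/2) * l₂^2*l₃ + ((-1 : ℂ)/2) * l₂*l₃^2) * H2
    + (((1 : ℂ)/6) * l₁^2*l₂ + ((-1 : ℂ)/6) * l₁^2*l₃ + ((-1 : ℂ)/6) * l₁*l₂^2 + ((1 : ℂ)/6) * l₁*l₃^2 + ((1 : ℂ)/2) * l₂^2*l₃ + ((-1 : ℂ)/2) * l₂*l₃^2) * H3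
    + (((11 : ℂ)/2) * l₁^2*l₂ + ((-7 : ℂ)/2) * l₁^2*l₃ + ((-11 : ℂ)/2) * l₁*l₂^2 + (1 : ℂ) * l₁*l₂*l₃ + ((5 : ℂ)/2) * l₁*l₃^2 + ((7 : ℂ)/2) * l₂^2*l₃ + ((-9 : ℂ)/2) * l₂*l₃^2 + (1 : ℂ) * l₃^3) * S2
    + (((-1 : ℂ)/4) * l₁^2*l₂ + ((1 : ℂ)/4) * l₁^2*l₃ + ((-1 : ℂ)/2) * l₁*l₂*l₃ + ((1 : ℂ)/4) * l₂^2*l₃ + ((1 : ℂ)/4) * l₂*l₃^2) * S4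
    + (((1 : ℂ)/2) * l₁^3 + ((-3 : ℂ)/2) * l₁^2*l₃ + ((-1 : ℂ)/2) * l₁*l₂^2 + ((1 : ℂ)/2) * l₁*l₂*l₃ + (1 : ℂ) * l₁*l₃^2 + ((9 : ℂ)/4) * l₂^2*l₃ + ((-9 : ℂ)/4) * l₂*l₃^2) * S1
    + ((2 : ℂ) * l₁^2*l₃ + (-1 : ℂ) * l₁*l₂*l₃ + (-1 : ℂ) * l₁*l₃^2) * S3
    + (((1 : ℂ)/2) * l₁*l₂*l₃) * S5
    + (((-1 : ℂ)/2) * l₁^2*l₃ + ((1 : ℂ)/2) * l₁*l₃^2) * S6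
end

section
/- Let γ ∈ ℂ[λ₁,λ₂,λ₃] be skew-symmetric in λ₁,λ₂, homogeneous of degree 3, and satisfy (λ₁−λ₂)γ(λ₁+λ₂,0,λ₃) + (λ₁−λ₃)γ(λ₂,0,λ₁+λ₃) − (λ₂−λ₃)γ(λ₁,0,λ₂+λ₃) − (λ₁+λ₂+λ₃)γ(λ₁,λ₂,λ₃) = 0. Then γ(λ₁,λ₂,λ₃) = (λ₁−λ₂)(b₁(λ₁²+λ₂²) + b₂λ₃² + (b₁+b₂)λ₁λ₂ + b₃(λ₁+λ₂)λ₃) for some constants b₁, b₂, b₃ ∈ ℂ. -/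
open MvPolynomial

private lemma finsupp_deg3 (d : Fin 3 →₀ ℕ) : d.degree = d 0 + d 1 + d 2 := by
  rw [Finsupp.degree_apply,
    Finset.sum_subset (Finset.subset_univ _)
      (fun i _ hi => Finsupp.notMem_support_iff.mp hi)]
  exact Fin.sum_univ_three d

private lemma rep3 (p : MvPolynomial (Fin 3) ℂ) (hp : p.IsHomogeneous 3) :
    ∃ A B C D E F G H I J : ℂ, ∀ x y z : ℂ, eval ![x, y, z] p =
      A*x^3 + B*x^2*y + C*x^2*z + D*x*y^2 + E*x*y*z + F*x*z^2
        + G*y^3 + H*y^2*z + I*y*z^2 + J*z^3 := by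
  classical
  set fs : ℕ × ℕ × ℕ → (Fin 3 →₀ ℕ) :=
    (fun t => Finsupp.equivFunOnFinite.symm ![t.1, t.2.1, t.2.2]) with hfs
  set c : ℕ → ℕ → ℕ → ℂ := (fun i j k => coeff (fs (i, j, k)) p) with hcdef
  have hfsd : ∀ t : ℕ × ℕ × ℕ, (fs t).degree = t.1 + t.2.1 + t.2.2 := by
    intro t
    rw [finsupp_deg3]
    simp [hfs]
  have h0 : ∀ i j k : ℕ, i + j + k ≠ 3 → c i j k = 0 := by
    intro i j k h
    exact hp.coeff_eq_zero (by rw [hfsd]; exact h)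
  refine ⟨c 3 0 0, c 2 1 0, c 2 0 1, c 1 2 0, c 1 1 1, c 1 0 2,
    c 0 3 0, c 0 2 1, c 0 1 2, c 0 0 3, ?_⟩
  intro x y z
  have key : eval ![x, y, z] p =
      ∑ t ∈ (Finset.range 4 ×ˢ Finset.range 4 ×ˢ Finset.range 4),
        c t.1 t.2.1 t.2.2 * (x ^ t.1 * y ^ t.2.1 * z ^ t.2.2) := by
    rw [eval_eq']
    have hsub : p.support ⊆
        (Finset.range 4 ×ˢ Finset.range 4 ×ˢ Finset.range 4).image fs := by
      intro d hd
      have hne : coeff d p ≠ 0 := MvPolynomial.mem_support_iff.mp hd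
      have hs : d.degree = 3 := by
        by_contra h
        exact hne (hp.coeff_eq_zero h)
      rw [finsupp_deg3] at hs
      refine Finset.mem_image.mpr ⟨(d 0, d 1, d 2), ?_, ?_⟩
      · simp only [Finset.mem_product, Finset.mem_range]
        omega
      · rw [hfs]
        simp only
        rw [Equiv.symm_apply_eq]
        funext i
        fin_cases i <;> rfl
    rw [Finset.sum_subset hsub (fun d _ hd =>
      by rw [MvPolynomial.notMem_support_iff.mp hd, zero_mul])]
    rw [Finset.sum_image (fun a _ b _ hab => ?_)]
    · refine Finset.sum_congr rfl fun t _ => ?_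
      rcases t with ⟨i, j, k⟩
      simp only [hcdef]
      rw [Fin.prod_univ_three]
      simp [hfs]
    · rcases a with ⟨a1, a2, a3⟩
      rcases b with ⟨b1, b2, b3⟩
      have h2 := Finsupp.equivFunOnFinite.symm.injective hab
      have e1 := congrFun h2 0
      have e2 := congrFun h2 1
      have e3 := congrFun h2 2
      simp only [Matrix.cons_val_zero, Matrix.cons_val_one, Matrix.head_cons,
        Matrix.cons_val_two, Matrix.tail_cons] at e1 e2 e3
      exact Prod.ext e1 (Prod.ext e2 e3)
  rw [key]
  simp only [Finset.sum_product, Finset.sum_range_succ, Finset.sum_range_zero]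
  rw [h0 0 0 0 (by norm_num), h0 0 0 1 (by norm_num), h0 0 0 2 (by norm_num), h0 0 1 0 (by norm_num), h0 0 1 1 (by norm_num), h0 0 1 3 (by norm_num), h0 0 2 0 (by norm_num), h0 0 2 2 (by norm_num), h0 0 2 3 (by norm_num), h0 0 3 1 (by norm_num), h0 0 3 2 (by norm_num), h0 0 3 3 (by norm_num), h0 1 0 0 (by norm_num), h0 1 0 1 (by norm_num), h0 1 0 3 (by norm_num), h0 1 1 0 (by norm_num), h0 1 1 2 (by norm_num), h0 1 1 3 (by norm_num), h0 1 2 1 (by norm_num), h0 1 2 2 (by norm_num), h0 1 2 3 (by norm_num), h0 1 3 0 (by norm_num), h0 1 3 1 (by norm_num), h0 1 3 2 (by norm_num), h0 1 3 3 (by norm_num), h0 2 0 0 (by norm_num), h0 2 0 2 (by norm_num), h0 2 0 3 (by norm_num), h0 2 1 1 (by norm_num), h0 2 1 2 (by norm_num), h0 2 1 3 (by norm_num), h0 2 2 0 (by norm_num), h0 2 2 1 (by norm_num), h0 2 2 2 (by norm_num), h0 2 2 3 (by norm_num), h0 2 3 0 (by norm_num), h0 2 3 1 (by norm_num), h0 2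 3 2 (by norm_num), h0 2 3 3 (by norm_num), h0 3 0 1 (by norm_num), h0 3 0 2 (by norm_num), h0 3 0 3 (by norm_num), h0 3 1 0 (by norm_num), h0 3 1 1 (by norm_num), h0 3 1 2 (by norm_num), h0 3 1 3 (by norm_num), h0 3 2 0 (by norm_num), h0 3 2 1 (by norm_num), h0 3 2 2 (by norm_num), h0 3 2 3 (by norm_num), h0 3 3 0 (by norm_num), h0 3 3 1 (by norm_num), h0 3 3 2 (by norm_num), h0 3 3 3 (by norm_num)]
  ring

/-- a homogeneous degree-3 polynomial `γ(λ₁,λ₂,λ₃)`,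
skew-symmetric in `λ₁,λ₂`, satisfying
`(λ₁−λ₂)γ(λ₁+λ₂,0,λ₃) + (λ₁−λ₃)γ(λ₂,0,λ₁+λ₃) − (λ₂−λ₃)γ(λ₁,0,λ₂+λ₃)
  − (λ₁+λ₂+λ₃)γ(λ₁,λ₂,λ₃) = 0`,
equals `(λ₁−λ₂)(b₁(λ₁²+λ₂²) + b₂λ₃² + (b₁+b₂)λ₁λ₂ + b₃(λ₁+λ₂)λ₃)` for some
constants `b₁, b₂, b₃`. -/
theorem stmt10 (γ : MvPolynomial (Fin 3) ℂ)
    (hskew : ∀ l₁ l₂ l₃ : ℂ, eval ![l₁, l₂, l₃] γ = -eval ![l₂, l₁, l₃] γ)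
    (hhom : γ.IsHomogeneous 3)
    (heq : ∀ l₁ l₂ l₃ : ℂ,
      (l₁ - l₂) * eval ![l₁ + l₂, 0, l₃] γ + (l₁ - l₃) * eval ![l₂, 0, l₁ + l₃] γ
        - (l₂ - l₃) * eval ![l₁, 0, l₂ + l₃] γ
        - (l₁ + l₂ + l₃) * eval ![l₁, l₂, l₃] γ = 0) :
    ∃ b₁ b₂ b₃ : ℂ, ∀ l₁ l₂ l₃ : ℂ,
      eval ![l₁, l₂, l₃] γ
        = (l₁ - l₂) * (b₁ * (l₁^2 + l₂^2) + b₂ * l₃^2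
            + (b₁ + b₂) * l₁ * l₂ + b₃ * (l₁ + l₂) * l₃) := by
  obtain ⟨A, B, C, D, E, F, G, H, I, J, hf⟩ := rep3 γ hhom
  have s1 := hskew 1 0 0
  have s2 := hskew 0 0 1
  have s3 := hskew 1 1 0
  have s4 := hskew 1 0 1
  have s5 := hskew 1 0 2
  have s6 := hskew 1 1 1
  simp only [hf] at s1 s2 s3 s4 s5 s6
  have hG : G = -A := by linear_combination s1
  have hJ : J = 0 := by linear_combination s2 / 2
  have hD : D = -B := by linear_combination s3 / 2 - s1
  have hI : I = -F := by linear_combination (s5 - 2 * s4 + s1 - 6 * s2) / 2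
  have hH : H = -C := by linear_combination s4 - s1 - s2 - hI
  have hE : E = 0 := by linear_combination s6 / 2 - s1 - hD - hH - hI - s2 / 2
  have h := heq 2 1 1
  simp only [hf] at h
  have hB : B = F := by
    linear_combination -h / 8 - s1 / 2 - hD - hH / 2 - hI / 2 - hE + 3 * hJ
  refine ⟨A, F, C, fun x y z => ?_⟩
  rw [hf]
  linear_combination (x^2*y - x*y^2) * hB + x*y^2 * hD + y^3 * hG
    + y^2*z * hH + y*z^2 * hI + x*y*z * hE + z^3 * hJ
end

section
/- Let γ be a 2-cocycle in the basic complex of the W(2,2) Lie conformal algebra with trivial coefficients ℂ such that γ_{λ₁,λ}(L,L)|_{λ=0} = 0 and γ_{λ₁,λ}(M,L)|_{λ=0} = 0. Then γ = 0. Consequently, the second basic cohomology H̃²(𝒲,ℂ) vanishes. -/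
open MvPolynomial

/-! ### The basic complex of the W(2,2) Lie conformal algebra `𝒲` with
trivial coefficients `ℂ`.

`𝒲` is the free `ℂ[∂]`-module on `{L, M}` with `[L_λ L] = (∂+2λ)L`,
`[L_λ M] = (∂+2λ)M`, `[M_λ M] = 0`.  Since `𝒲` is free over `ℂ[∂]` on the
basis `{L, M}` (encoded as `Fin 2`, `0 = L`, `1 = M`), a `q`-cochain is
determined, via conformal antilinearity, by its values on basis tuples; we
encode it as a function of a basis tuple `X : Fin q → Fin 2` and values of the
variables `λ : Fin q → ℂ`, polynomial in `λ` and skew-symmetric under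
simultaneous permutations. -/

abbrev WCochain (q : ℕ) : Type := (Fin q → Fin 2) → (Fin q → ℂ) → ℂ

/-- the value is polynomial in the `λ`'s. -/
def IsPolyCochain {q : ℕ} (γ : WCochain q) : Prop :=
  ∀ X, ∃ P : MvPolynomial (Fin q) ℂ, ∀ l, γ X l = eval l P

/-- skew-symmetry with respect to simultaneous permutations of the arguments
and the variables. -/
def IsSkewCochain {q : ℕ} (γ : WCochain q) : Prop :=
  ∀ σ : Equiv.Perm (Fin q), ∀ X l,
    γ (X ∘ σ) (l ∘ σ) = (Equiv.Perm.sign σ : ℤ) * γ X l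

def IsCochain {q : ℕ} (γ : WCochain q) : Prop := IsPolyCochain γ ∧ IsSkewCochain γ

/-- scalar coefficient of `[x_λ y]` for basis elements: `0` iff `x = y = M`. -/
def bcoef (x y : Fin 2) : ℂ := if x = 1 ∧ y = 1 then 0 else 1

/-- the basis element appearing in `[x_λ y]`: `[L L] ∝ L`, `[L M] ∝ M`,
`[M L] ∝ M`. -/
def bres (x y : Fin 2) : Fin 2 := max x y

/-- the tuple `X` with entries `i` and `j` removed (`i < j`); entry `k` of the
result is given, with junk value `d` out of range. -/
def removeTwo {α : Type*} {n : ℕ} (i j : Fin n) (X : Fin n → α) (d : α) : ℕ → α :=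
  fun k => (((List.ofFn X).eraseIdx j.val).eraseIdx i.val).getD k d

/-- the differential of the basic complex with trivial coefficients:
`(dγ)_{λ₁,…,λ_{q+1}}(a₁,…,a_{q+1}) = ∑_{i<j} (−1)^{i+j}
γ_{λᵢ+λⱼ,λ₁,…,λ̂ᵢ,…,λ̂ⱼ,…}([a_{i λᵢ} a_j],a₁,…,âᵢ,…,âⱼ,…)`; for basis
arguments, `[a_{i λᵢ} a_j]` contributes the factor `(λᵢ−λⱼ)·bcoef` on the
basis element `bres` placed in the first slot (by conformal antilinearity,
since the coefficients are trivial). -/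
noncomputable def dW {q : ℕ} (γ : WCochain q) : WCochain (q + 1) :=
  fun X l =>
    ∑ p ∈ Finset.univ.filter (fun p : Fin (q+1) × Fin (q+1) => p.1 < p.2),
      (-1 : ℂ) ^ (p.1.val + p.2.val) * bcoef (X p.1) (X p.2) * (l p.1 - l p.2) *
        γ (fun k => if k.val = 0 then bres (X p.1) (X p.2)
              else removeTwo p.1 p.2 X 0 (k.val - 1))
          (fun k => if k.val = 0 then l p.1 + l p.2
              else removeTwo p.1 p.2 l 0 (k.val - 1))

/-- `dW` as a linear map. -/
noncomputable def dWLin (q : ℕ) : WCochain q →ₗ[ℂ] WCochain (q + 1) where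
  toFun := dW
  map_add' γ₁ γ₂ := by
    funext X l
    simp only [dW, Pi.add_apply, mul_add, Finset.sum_add_distrib]
  map_smul' c γ := by
    funext X l
    simp only [dW, Pi.smul_apply, smul_eq_mul, RingHom.id_apply, Finset.mul_sum]
    exact Finset.sum_congr rfl fun p _ => by ring

/-- the `ℂ`-subspace of genuine cochains. -/
noncomputable def cochainSub (q : ℕ) : Submodule ℂ (WCochain q) where
  carrier := {γ | IsCochain γ}
  add_mem' := by
    rintro a b ⟨hap, has⟩ ⟨hbp, hbs⟩
    refine ⟨fun X => ?_, fun σ X l => ?_⟩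
    · obtain ⟨P, hP⟩ := hap X; obtain ⟨Q, hQ⟩ := hbp X
      exact ⟨P + Q, fun l => by simp [hP, hQ]⟩
    · have := has σ X l; have := hbs σ X l
      simp only [Pi.add_apply, *]; ring
  zero_mem' := ⟨fun X => ⟨0, by simp⟩, fun σ X l => by simp⟩
  smul_mem' := by
    rintro c γ ⟨hp, hs⟩
    refine ⟨fun X => ?_, fun σ X l => ?_⟩
    · obtain ⟨P, hP⟩ := hp X
      exact ⟨c • P, fun l => by simp [hP]⟩
    · have := hs σ X l
      simp only [Pi.smul_apply, smul_eq_mul, *]; ring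

/-- basic `q`-cocycles. -/
noncomputable def cocycleSub (q : ℕ) : Submodule ℂ (WCochain q) :=
  cochainSub q ⊓ LinearMap.ker (dWLin q)

/-- basic `q`-coboundaries. -/
noncomputable def coboundSub : (q : ℕ) → Submodule ℂ (WCochain q)
  | 0 => ⊥
  | (q + 1) => Submodule.map (dWLin q) (cochainSub q)

/-- the `q`-th basic cohomology `H̃^q(𝒲,ℂ)`. -/
noncomputable abbrev basicH (q : ℕ) :=
  cocycleSub q ⧸ Submodule.comap (cocycleSub q).subtype (coboundSub q)

/-- the action of `∂` on the basic complex with trivial coefficients: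
`(∂γ)_{λ₁,…,λ_q} = (∑ᵢ λᵢ)·γ_{λ₁,…,λ_q}`. -/
noncomputable def paW (q : ℕ) : WCochain q →ₗ[ℂ] WCochain q where
  toFun γ := fun X l => (∑ i, l i) * γ X l
  map_add' γ₁ γ₂ := by funext X l; simp [mul_add]
  map_smul' c γ := by funext X l; simp; ring

/-- reduced `q`-cocycles: cochains `γ` with `dγ ∈ ∂C̃^{q+1}`. -/
noncomputable def redZ (q : ℕ) : Submodule ℂ (WCochain q) :=
  cochainSub q ⊓
    Submodule.comap (dWLin q) (Submodule.map (paW (q+1)) (cochainSub (q+1)))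

/-- reduced `q`-coboundaries: `dC̃^{q−1} + ∂C̃^q`. -/
noncomputable def redB : (q : ℕ) → Submodule ℂ (WCochain q)
  | 0 => Submodule.map (paW 0) (cochainSub 0)
  | (q + 1) => Submodule.map (dWLin q) (cochainSub q)
      ⊔ Submodule.map (paW (q+1)) (cochainSub (q+1))

/-- the `q`-th reduced cohomology `H^q(𝒲,ℂ)`. -/
noncomputable abbrev reducedH (q : ℕ) :=
  redZ q ⧸ Submodule.comap (redZ q).subtype (redB q)


/-! ### Auxiliary lemmas for the proof of `stmt14`. -/

private lemma vec2_eta {α : Type*} (l : Fin 2 → α) : ![l 0, l 1] = l := by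
  funext i; fin_cases i <;> rfl

/-- If a polynomial function on `ℂ²` is killed by multiplication by `λ₀+λ₁`,
it vanishes. -/
private lemma stepA (F : (Fin 2 → ℂ) → ℂ)
    (hP : ∃ P : MvPolynomial (Fin 2) ℂ, ∀ l, F l = eval l P)
    (h : ∀ l : Fin 2 → ℂ, (l 0 + l 1) * F l = 0) : ∀ l, F l = 0 := by
  obtain ⟨P, hPe⟩ := hP
  have hz : (X 0 + X 1 : MvPolynomial (Fin 2) ℂ) * P = 0 := by
    apply MvPolynomial.funext
    intro l
    simpa [hPe] using h l
  have hX : (X 0 + X 1 : MvPolynomial (Fin 2) ℂ) ≠ 0 := by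
    intro hc
    have := congrArg (eval ![1, 0]) hc
    simp at this
  have hP0 : P = 0 := by
    rcases mul_eq_zero.mp hz with h' | h'
    · exact absurd h' hX
    · exact h'
  intro l; simp [hPe, hP0]

private lemma evalPA (P : MvPolynomial (Fin 2) ℂ) (x : ℂ) :
    Polynomial.eval x (MvPolynomial.aeval ![Polynomial.X, 0] P) = eval ![x, 0] P := by
  induction P using MvPolynomial.induction_on with
  | C a => simp
  | add p q hp hq => simp [hp, hq]
  | mul_X p i hp => fin_cases i <;> simp [hp]

private lemma evalAP (F : Polynomial ℂ) (l : Fin 2 → ℂ) :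
    eval l (Polynomial.aeval (X 0 + X 1 : MvPolynomial (Fin 2) ℂ) F)
      = Polynomial.eval (l 0 + l 1) F := by
  induction F using Polynomial.induction_on' with
  | add p q hp hq => simp [hp, hq]
  | monomial n a => simp [Polynomial.aeval_monomial]

private lemma evalAP1 (F : Polynomial ℂ) (l : Fin 1 → ℂ) :
    eval l (Polynomial.aeval (X 0 : MvPolynomial (Fin 1) ℂ) F)
      = Polynomial.eval (l 0) F := by
  induction F using Polynomial.induction_on' with
  | add p q hp hq => simp [hp, hq]
  | monomial n a => simp [Polynomial.aeval_monomial]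

private lemma factorX (F : Polynomial ℂ) (h : F.eval 0 = 0) :
    ∃ F1 : Polynomial ℂ, ∀ x, F.eval x = x * F1.eval x := by
  have hdvd : Polynomial.X ∣ F := by
    rw [Polynomial.X_dvd_iff, Polynomial.coeff_zero_eq_eval_zero]; exact h
  obtain ⟨F1, hF1⟩ := hdvd
  exact ⟨F1, fun x => by rw [hF1]; simp⟩

/-- Explicit form of the differential on 2-cochains. -/
private lemma dW3 (γ : WCochain 2) (X : Fin 3 → Fin 2) (l : Fin 3 → ℂ) :
    dW γ X l =
      -(bcoef (X 0) (X 1) * (l 0 - l 1) * γ ![bres (X 0) (X 1), X 2] ![l 0 + l 1, l 2])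
      + bcoef (X 0) (X 2) * (l 0 - l 2) * γ ![bres (X 0) (X 2), X 1] ![l 0 + l 2, l 1]
      - bcoef (X 1) (X 2) * (l 1 - l 2) * γ ![bres (X 1) (X 2), X 0] ![l 1 + l 2, l 0] := by
  have hfil : (Finset.univ.filter (fun p : Fin 3 × Fin 3 => p.1 < p.2))
      = {((0:Fin 3),(1:Fin 3)),(0,2),(1,2)} := by decide
  rw [dW, hfil, Finset.sum_insert (by decide), Finset.sum_insert (by decide),
    Finset.sum_singleton]
  have hA1 : (fun k : Fin 2 => if k.val = 0 then bres (X 0) (X 1)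
      else removeTwo 0 1 X 0 (k.val - 1)) = ![bres (X 0) (X 1), X 2] := by
    funext k; fin_cases k <;> rfl
  have hA2 : (fun k : Fin 2 => if k.val = 0 then l 0 + l 1
      else removeTwo 0 1 l 0 (k.val - 1)) = ![l 0 + l 1, l 2] := by
    funext k; fin_cases k <;> rfl
  have hB1 : (fun k : Fin 2 => if k.val = 0 then bres (X 0) (X 2)
      else removeTwo 0 2 X 0 (k.val - 1)) = ![bres (X 0) (X 2), X 1] := by
    funext k; fin_cases k <;> rfl
  have hB2 : (fun k : Fin 2 => if k.val = 0 then l 0 + l 2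
      else removeTwo 0 2 l 0 (k.val - 1)) = ![l 0 + l 2, l 1] := by
    funext k; fin_cases k <;> rfl
  have hC1 : (fun k : Fin 2 => if k.val = 0 then bres (X 1) (X 2)
      else removeTwo 1 2 X 0 (k.val - 1)) = ![bres (X 1) (X 2), X 0] := by
    funext k; fin_cases k <;> rfl
  have hC2 : (fun k : Fin 2 => if k.val = 0 then l 1 + l 2
      else removeTwo 1 2 l 0 (k.val - 1)) = ![l 1 + l 2, l 0] := by
    funext k; fin_cases k <;> rfl
  rw [hA1, hA2, hB1, hB2, hC1, hC2]
  norm_num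
  ring

/-- Explicit form of the differential on 1-cochains. -/
private lemma dW2 (φ : WCochain 1) (X : Fin 2 → Fin 2) (l : Fin 2 → ℂ) :
    dW φ X l =
      -(bcoef (X 0) (X 1) * (l 0 - l 1) * φ ![bres (X 0) (X 1)] ![l 0 + l 1]) := by
  have hfil : (Finset.univ.filter (fun p : Fin 2 × Fin 2 => p.1 < p.2))
      = {((0:Fin 2),(1:Fin 2))} := by decide
  rw [dW, hfil, Finset.sum_singleton]
  have hA1 : (fun k : Fin 1 => if k.val = 0 then bres (X 0) (X 1)
      else removeTwo 0 1 X 0 (k.val - 1)) = ![bres (X 0) (X 1)] := by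
    funext k; fin_cases k <;> rfl
  have hA2 : (fun k : Fin 1 => if k.val = 0 then l 0 + l 1
      else removeTwo 0 1 l 0 (k.val - 1)) = ![l 0 + l 1] := by
    funext k; fin_cases k <;> rfl
  rw [hA1, hA2]
  norm_num

/-- Skew-symmetry on basis pairs. -/
private lemma skew2 {γ : WCochain 2} (hs : IsSkewCochain γ) (u v : Fin 2) (y z : ℂ) :
    γ ![v, u] ![z, y] = -γ ![u, v] ![y, z] := by
  have h := hs (Equiv.swap 0 1) ![u, v] ![y, z]
  have hX : (![u, v] ∘ (Equiv.swap (0:Fin 2) 1)) = ![v, u] := by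
    funext k; fin_cases k <;> simp
  have hl : (![y, z] ∘ (Equiv.swap (0:Fin 2) 1)) = ![z, y] := by
    funext k; fin_cases k <;> simp
  rw [hX, hl, Equiv.Perm.sign_swap (by decide)] at h
  rw [h]; push_cast; ring

section components

variable {γ : WCochain 2} (hc : IsCochain γ) (hd : dW γ = 0)
include hc hd

/-- the `(L,L)` functional equation. -/
private lemma eqA : ∀ y z : ℂ, (y + z) * γ ![0, 0] ![y, z] = (y - z) * γ ![0, 0] ![y + z, 0] := by
  intro y z
  have h := congrFun (congrFun hd ![0, 0, 0]) ![0, y, z]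
  rw [dW3] at h
  simp only [Pi.zero_apply, Matrix.cons_val_zero, Matrix.cons_val_one, Matrix.head_cons,
    Matrix.cons_val_two, Matrix.tail_cons, zero_add, zero_sub] at h
  have hb : bcoef 0 0 = 1 := rfl
  have hr : bres 0 0 = 0 := rfl
  rw [hb, hr] at h
  have hsw := skew2 hc.2 0 0 y z
  rw [hsw] at h
  linear_combination h

/-- the `(L,M)` functional equation. -/
private lemma eqB : ∀ y z : ℂ, (y + z) * γ ![0, 1] ![y, z] = (y - z) * γ ![1, 0] ![y + z, 0] := by
  intro y z
  have h := congrFun (congrFun hd ![0, 0, 1]) ![0, y, z]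
  rw [dW3] at h
  simp only [Pi.zero_apply, Matrix.cons_val_zero, Matrix.cons_val_one, Matrix.head_cons,
    Matrix.cons_val_two, Matrix.tail_cons, zero_add, zero_sub] at h
  have hb1 : bcoef 0 0 = 1 := rfl
  have hb2 : bcoef 0 1 = 1 := rfl
  have hr1 : bres 0 0 = 0 := rfl
  have hr2 : bres 0 1 = 1 := rfl
  rw [hb1, hb2, hr1, hr2] at h
  have hsw := skew2 hc.2 0 1 y z
  rw [hsw] at h
  linear_combination h

/-- the `(M,M)` functional equation. -/
private lemma eqC : ∀ y z : ℂ, (y + z) * γ ![1, 1] ![y, z] = 0 := by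
  intro y z
  have h := congrFun (congrFun hd ![0, 1, 1]) ![0, y, z]
  rw [dW3] at h
  simp only [Pi.zero_apply, Matrix.cons_val_zero, Matrix.cons_val_one, Matrix.head_cons,
    Matrix.cons_val_two, Matrix.tail_cons, zero_add, zero_sub] at h
  have hb1 : bcoef 0 1 = 1 := rfl
  have hb2 : bcoef 1 1 = 0 := rfl
  have hr1 : bres 0 1 = 1 := rfl
  rw [hb1, hb2, hr1] at h
  have hsw := skew2 hc.2 1 1 y z
  rw [hsw] at h
  linear_combination h

/-- `γ(M,M) = 0` for every cocycle. -/
private lemma compMM : ∀ l, γ ![1, 1] l = 0 := by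
  apply stepA _ (hc.1 ![1, 1])
  intro l
  have := eqC hc hd (l 0) (l 1)
  rwa [vec2_eta] at this

end components

/-- a basic 2-cocycle `γ` of `𝒲` with trivial coefficients
such that `γ_{λ₁,λ}(L,L)|_{λ=0} = 0` and `γ_{λ₁,λ}(M,L)|_{λ=0} = 0` vanishes;
consequently `H̃²(𝒲,ℂ) = 0`.  (`0 = L`, `1 = M`.) -/
theorem stmt14 :
    (∀ γ : WCochain 2, IsCochain γ → dW γ = 0 →
      (∀ x : ℂ, γ ![0, 0] ![x, 0] = 0) →
      (∀ x : ℂ, γ ![1, 0] ![x, 0] = 0) →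
      γ = 0) ∧
    Subsingleton (basicH 2) := by
  have hfin : ∀ v : Fin 2, v = 0 ∨ v = 1 := by decide
  have main : ∀ γ : WCochain 2, IsCochain γ → dW γ = 0 →
      (∀ x : ℂ, γ ![0, 0] ![x, 0] = 0) →
      (∀ x : ℂ, γ ![1, 0] ![x, 0] = 0) → γ = 0 := by
    intro γ hc hd h1 h2
    have ha : ∀ l, γ ![0, 0] l = 0 := by
      apply stepA _ (hc.1 ![0, 0])
      intro l
      have h := eqA hc hd (l 0) (l 1)
      rw [vec2_eta] at h
      rw [h, h1, mul_zero]
    have hb : ∀ l, γ ![0, 1] l = 0 := by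
      apply stepA _ (hc.1 ![0, 1])
      intro l
      have h := eqB hc hd (l 0) (l 1)
      rw [vec2_eta] at h
      rw [h, h2, mul_zero]
    have hm : ∀ l, γ ![1, 0] l = 0 := by
      intro l
      have h := skew2 hc.2 0 1 (l 1) (l 0)
      rw [vec2_eta] at h
      rw [h, hb, neg_zero]
    have hmm := compMM hc hd
    funext Y m
    have hY : Y = ![Y 0, Y 1] := (vec2_eta Y).symm
    rcases hfin (Y 0) with h0 | h0 <;> rcases hfin (Y 1) with h1' | h1' <;>
      rw [h0, h1'] at hY <;> rw [hY] <;>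
      simp [ha, hb, hm, hmm]
  refine ⟨main, ?_⟩
  rw [Submodule.Quotient.subsingleton_iff, Submodule.eq_top_iff']
  rintro ⟨γ, hγ⟩
  rw [Submodule.mem_comap]
  obtain ⟨hcmem, hker⟩ := Submodule.mem_inf.mp hγ
  have hcc : IsCochain γ := hcmem
  have hd : dW γ = 0 := LinearMap.mem_ker.mp hker
  obtain ⟨P00, hP00⟩ := hcc.1 ![0, 0]
  obtain ⟨P01, hP01⟩ := hcc.1 ![0, 1]
  obtain ⟨P10, hP10⟩ := hcc.1 ![1, 0]
  -- the one-variable polynomials `f(x) = γ(L,L)(x,0)`, `g(x) = γ(M,L)(x,0)`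
  have hF : ∀ x : ℂ, Polynomial.eval x (MvPolynomial.aeval ![Polynomial.X, 0] P00)
      = γ ![0, 0] ![x, 0] := fun x => by rw [evalPA, ← hP00]
  have hG : ∀ x : ℂ, Polynomial.eval x (MvPolynomial.aeval ![Polynomial.X, 0] P10)
      = γ ![1, 0] ![x, 0] := fun x => by rw [evalPA, ← hP10]
  have hF0 : Polynomial.eval (0:ℂ) (MvPolynomial.aeval ![Polynomial.X, 0] P00) = 0 := by
    rw [hF]
    have h := skew2 hcc.2 0 0 0 0
    linear_combination h / 2
  have hG0 : Polynomial.eval (0:ℂ) (MvPolynomial.aeval ![Polynomial.X, 0] P10) = 0 := by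
    rw [hG]
    have h := eqB hcc hd 1 (-1)
    norm_num at h
    linear_combination h
  obtain ⟨F1, hF1⟩ := factorX _ hF0
  obtain ⟨G1, hG1⟩ := factorX _ hG0
  -- closed forms of the components of γ
  have haF : ∀ l : Fin 2 → ℂ, γ ![0, 0] l = (l 0 - l 1) * F1.eval (l 0 + l 1) := by
    have hz := stepA (fun l => γ ![0, 0] l - (l 0 - l 1) * F1.eval (l 0 + l 1))
      ⟨P00 - (X 0 - X 1) * Polynomial.aeval (X 0 + X 1 : MvPolynomial (Fin 2) ℂ) F1,
        fun l => by rw [map_sub, map_mul, map_sub, eval_X, eval_X, evalAP, ← hP00]⟩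
      (by
        intro l
        have hEa := eqA hcc hd (l 0) (l 1)
        rw [vec2_eta] at hEa
        have hf := hF (l 0 + l 1)
        have hf2 := hF1 (l 0 + l 1)
        linear_combination hEa + (l 0 - l 1) * hf2 - (l 0 - l 1) * hf)
    intro l
    have := hz l
    linear_combination this
  have hbG : ∀ l : Fin 2 → ℂ, γ ![0, 1] l = (l 0 - l 1) * G1.eval (l 0 + l 1) := by
    have hz := stepA (fun l => γ ![0, 1] l - (l 0 - l 1) * G1.eval (l 0 + l 1))
      ⟨P01 - (X 0 - X 1) * Polynomial.aeval (X 0 + X 1 : MvPolynomial (Fin 2) ℂ) G1,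
        fun l => by rw [map_sub, map_mul, map_sub, eval_X, eval_X, evalAP, ← hP01]⟩
      (by
        intro l
        have hEb := eqB hcc hd (l 0) (l 1)
        rw [vec2_eta] at hEb
        have hg := hG (l 0 + l 1)
        have hg2 := hG1 (l 0 + l 1)
        linear_combination hEb + (l 0 - l 1) * hg2 - (l 0 - l 1) * hg)
    intro l
    have := hz l
    linear_combination this
  have hmG : ∀ l : Fin 2 → ℂ, γ ![1, 0] l = (l 0 - l 1) * G1.eval (l 0 + l 1) := by
    intro l
    have h := skew2 hcc.2 0 1 (l 1) (l 0)
    rw [vec2_eta] at h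
    rw [h, hbG ![l 1, l 0]]
    simp only [Matrix.cons_val_zero, Matrix.cons_val_one, Matrix.head_cons]
    rw [add_comm (l 1) (l 0)]
    ring
  have hmm := compMM hcc hd
  -- the primitive 1-cochain
  refine Submodule.mem_map.mpr
    ⟨fun Y m => if Y 0 = 0 then -(F1.eval (m 0)) else -(G1.eval (m 0)), ⟨?_, ?_⟩, ?_⟩
  · -- polynomiality
    intro Y
    by_cases hY : Y 0 = 0
    · exact ⟨Polynomial.aeval (X 0 : MvPolynomial (Fin 1) ℂ) (-F1),
        fun m => by simp [hY, evalAP1]⟩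
    · exact ⟨Polynomial.aeval (X 0 : MvPolynomial (Fin 1) ℂ) (-G1),
        fun m => by simp [hY, evalAP1]⟩
  · -- skew-symmetry
    intro σ Y m
    have hσ : σ = Equiv.refl (Fin 1) := Equiv.ext fun x => Subsingleton.elim _ _
    subst hσ
    simp [Function.comp_def]
    rfl
  · -- dφ = γ
    show dW (fun Y m => if Y 0 = 0 then -(F1.eval (m 0)) else -(G1.eval (m 0))) = γ
    funext Y m
    rw [dW2]
    have hY : Y = ![Y 0, Y 1] := (vec2_eta Y).symm
    rcases hfin (Y 0) with h0 | h0 <;> rcases hfin (Y 1) with h1' | h1' <;>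
        rw [h0, h1'] at hY ⊢ <;> rw [hY]
    · rw [haF m]
      norm_num [bcoef, bres]
    · rw [hbG m]
      norm_num [bcoef, bres]
    · rw [hmG m]
      norm_num [bcoef, bres]
    · rw [hmm m]
      norm_num [bcoef, bres]
end

section
/- For a homogeneous q-cochain γ of polynomial degree deg γ in the basic complex of the W(2,2) Lie conformal algebra with trivial coefficients, the homotopy operator τ defined by (τγ)_{λ₁,...,λ_{q−1}}(X₁,...,X_{q−1}) = (−1)^{q−1} (∂/∂λ) γ_{λ₁,...,λ_{q−1},λ}(X₁,...,X_{q−1},L)|_{λ=0} satisfies (dτ + τd)γ = (deg γ − q)·γ. -/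
open MvPolynomial

/-! ### auxiliary lemmas -/

section Aux

lemma hasDerivAt_eval_update {m : ℕ} (P : MvPolynomial (Fin m) ℂ) (w : Fin m → ℂ) (i : Fin m)
    (a : ℂ) :
    HasDerivAt (fun z => eval (Function.update w i z) P)
      (eval (Function.update w i a) (pderiv i P)) a := by
  induction P using MvPolynomial.induction_on with
  | C c => simpa using hasDerivAt_const a c
  | add p r hp hr =>
    have h := hp.add hr
    simp only [map_add]
    exact h
  | mul_X p j hp =>
    by_cases hij : i = j
    · subst hij
      have h := hp.mul (hasDerivAt_id a)
      simp only [eval_mul, eval_X, Function.update_self, pderiv_mul, pderiv_X_self,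
        map_add, mul_one] at h ⊢
      exact h
    · have h := hp.mul_const (w j)
      simp only [eval_mul, eval_X, Function.update_of_ne (Ne.symm hij), pderiv_mul,
        map_add, pderiv_X, Pi.single_eq_of_ne (Ne.symm hij), eval_mul] at h ⊢
      simpa using h

lemma hasDerivAt_eval_update' {m : ℕ} (P : MvPolynomial (Fin m) ℂ) (w : Fin m → ℂ) (i : Fin m)
    (c a : ℂ) :
    HasDerivAt (fun z => eval (Function.update w i (c + z)) P)
      (eval (Function.update w i (c + a)) (pderiv i P)) a := by
  have h2 : HasDerivAt (fun z : ℂ => c + z) 1 a := by simpa using (hasDerivAt_id a).const_add c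
  have h3 := (hasDerivAt_eval_update P w i (c + a)).comp a h2
  rw [mul_one] at h3
  exact h3

lemma euler_eval {m n : ℕ} {P : MvPolynomial (Fin m) ℂ} (h : P.IsHomogeneous n) (l : Fin m → ℂ) :
    ∑ i, l i * eval l (pderiv i P) = n * eval l P := by
  have key : ∀ d ∈ P.support,
      ∑ i : Fin m, l i * eval l (pderiv i (monomial d (coeff d P)))
        = n * eval l (monomial d (coeff d P)) := by
    intro d hd
    have hdeg : ∑ i : Fin m, (d i : ℂ) = (n : ℂ) := by
      have h1 := h (MvPolynomial.mem_support_iff.mp hd)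
      change (Finsupp.weight (fun _ => 1)) d = n at h1
      rw [← Finsupp.degree_eq_weight_one] at h1
      have h2 : Finsupp.degree d = ∑ i : Fin m, d i :=
        Finset.sum_subset (Finset.subset_univ _)
          (fun i _ hi => Finsupp.notMem_support_iff.mp hi)
      rw [h2] at h1
      rw [← h1]
      push_cast
      ring
    have hi : ∀ i : Fin m, l i * eval l (pderiv i (monomial d (coeff d P)))
        = (d i : ℂ) * eval l (monomial d (coeff d P)) := by
      intro i
      rw [pderiv_monomial, eval_monomial, eval_monomial,
        Finsupp.prod_fintype _ _ (by simp), Finsupp.prod_fintype _ _ (by simp)]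
      by_cases h0 : d i = 0
      · simp [h0]
      · have hsub : ∀ j : Fin m, (d - Finsupp.single i 1 : Fin m →₀ ℕ) j
            = if j = i then d i - 1 else d j := by
          intro j
          rcases eq_or_ne j i with rfl | hji
          · simp
          · simp [Finsupp.single_apply, Ne.symm hji, hji]
        rw [← Finset.mul_prod_erase Finset.univ _ (Finset.mem_univ i),
          ← Finset.mul_prod_erase Finset.univ (fun j => l j ^ d j) (Finset.mem_univ i)]
        have hprod : ∏ j ∈ Finset.univ.erase i, l j ^ (d - Finsupp.single i 1 : Fin m →₀ ℕ) j
            = ∏ j ∈ Finset.univ.erase i, l j ^ d j := by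
          refine Finset.prod_congr rfl fun j hj => ?_
          rw [hsub j, if_neg (Finset.mem_erase.mp hj).1]
        rw [hprod, hsub i, if_pos rfl]
        have hpow : l i ^ (d i - 1) * l i = l i ^ d i := by
          rw [← pow_succ]
          congr 1
          omega
        calc l i * (coeff d P * (d i : ℂ) * (l i ^ (d i - 1) * ∏ j ∈ Finset.univ.erase i, l j ^ d j))
            = (d i : ℂ) * (coeff d P * ((l i ^ (d i - 1) * l i) * ∏ j ∈ Finset.univ.erase i, l j ^ d j)) := by ring
          _ = _ := by rw [hpow]
    simp_rw [hi]
    rw [← Finset.sum_mul, hdeg]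
  have hrw : ∀ i : Fin m, eval l (pderiv i P)
      = ∑ d ∈ P.support, eval l (pderiv i (monomial d (coeff d P))) := by
    intro i
    conv_lhs => rw [P.as_sum]
    rw [map_sum, map_sum]
  simp_rw [hrw, Finset.mul_sum]
  rw [Finset.sum_comm, Finset.sum_congr rfl key, ← Finset.mul_sum, ← map_sum, ← P.as_sum]

variable {α : Type*}

lemma ofFn_snoc' {q : ℕ} (X : Fin (q + 1) → α) (d : α) :
    List.ofFn (Fin.snoc X d : Fin (q + 2) → α) = List.ofFn X ++ [d] := by
  rw [List.ofFn_succ' (Fin.snoc X d)]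
  simp [List.concat_eq_append]

lemma eraseIdx_ofFn_snoc_last {q : ℕ} (X : Fin (q + 1) → α) (d : α) :
    (List.ofFn (Fin.snoc X d : Fin (q + 2) → α)).eraseIdx (q + 1) = List.ofFn X := by
  rw [ofFn_snoc']
  rw [List.eraseIdx_append_of_length_le (by simp)]
  simp

lemma getD_eraseIdx_ofFn {q : ℕ} (X : Fin (q + 1) → α) (i : Fin (q + 1)) (d : α) (k : ℕ)
    (hk : k < q) :
    ((List.ofFn X).eraseIdx i.val).getD k d
      = if h : k < i.val then X ⟨k, by omega⟩ else X ⟨k + 1, by omega⟩ := by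
  have hlen : ((List.ofFn X).eraseIdx i.val).length = q := by
    rw [List.length_eraseIdx]
    simp only [List.length_ofFn]
    rw [if_pos i.isLt]
    omega
  rw [List.getD_eq_getElem _ _ (by omega), List.getElem_eraseIdx]
  split
  · rw [List.getElem_ofFn]
  · rw [List.getElem_ofFn]

lemma removeTwo_snoc_last {q : ℕ} (i : Fin (q + 1)) (X : Fin (q + 1) → α) (z d : α) (k : ℕ) :
    removeTwo (Fin.castSucc i) (Fin.last (q + 1)) (Fin.snoc X z) d k
      = ((List.ofFn X).eraseIdx i.val).getD k d := by
  unfold removeTwo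
  rw [show (Fin.last (q + 1)).val = q + 1 from rfl, eraseIdx_ofFn_snoc_last]
  rfl

/-- the cyclically-shifted tuple as a composition with `(cycleRange i)⁻¹`. -/
lemma tupleA {q : ℕ} (X : Fin (q + 1) → α) (t : α) (i : Fin (q + 1)) (d : α) :
    (fun k : Fin (q + 1) => if k.val = 0 then t
        else ((List.ofFn X).eraseIdx i.val).getD (k.val - 1) d)
      = Function.update X i t ∘ ⇑(i.cycleRange)⁻¹ := by
  funext k
  obtain ⟨m, rfl⟩ : ∃ m, k = i.cycleRange m :=
    ⟨(i.cycleRange)⁻¹ k, by simp⟩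
  simp only [Function.comp_apply]
  rw [← Equiv.Perm.mul_apply, inv_mul_cancel, Equiv.Perm.one_apply]
  rcases lt_trichotomy m i with hlt | heq | hgt
  · have hkv : (i.cycleRange m).val = m.val + 1 := Fin.coe_cycleRange_of_lt hlt
    have hmi : m.val < i.val := hlt
    have hmq : m.val < q := by have := i.isLt; omega
    rw [hkv, if_neg (by omega)]
    simp only [Nat.add_sub_cancel]
    rw [getD_eraseIdx_ofFn X i d m.val hmq, dif_pos hmi,
      Function.update_of_ne (show m ≠ i by simp only [ne_eq, Fin.ext_iff]; omega)]
  · have hkv : (i.cycleRange m).val = 0 := by simp [heq]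
    rw [if_pos hkv, heq, Function.update_self]
  · have hkv : (i.cycleRange m).val = m.val := by rw [Fin.cycleRange_of_gt hgt]
    have hmi : i.val < m.val := hgt
    have hmq : m.val - 1 < q := by have := m.isLt; omega
    rw [hkv, if_neg (by omega), getD_eraseIdx_ofFn X i d (m.val - 1) hmq, dif_neg (by omega),
      Function.update_of_ne (show m ≠ i by simp only [ne_eq, Fin.ext_iff]; omega)]
    exact congrArg X (Fin.ext (by simp only []; omega))

/-- matching of the `B`-terms: erasing two indices `< last` commutes with `snoc`. -/
lemma tupleB {q : ℕ} (i j : Fin (q + 1)) (hij : i < j) (X : Fin (q + 1) → α) (t z d : α) :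
    (Fin.snoc (fun k : Fin q => if k.val = 0 then t else removeTwo i j X d (k.val - 1)) z
        : Fin (q + 1) → α)
      = fun k : Fin (q + 1) => if k.val = 0 then t
          else removeTwo (Fin.castSucc i) (Fin.castSucc j) (Fin.snoc X z) d (k.val - 1) := by
  have hq : j.val ≤ q := Nat.lt_succ_iff.mp j.isLt
  have hij' : i.val < j.val := hij
  have hq1 : 1 ≤ q := by omega
  have hlen0 : ((List.ofFn X).eraseIdx j.val).length = q := by
    rw [List.length_eraseIdx]
    simp only [List.length_ofFn]
    rw [if_pos j.isLt]
    omega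
  have hlen : (((List.ofFn X).eraseIdx j.val).eraseIdx i.val).length = q - 1 := by
    rw [List.length_eraseIdx, hlen0]
    rw [if_pos (by omega)]
  have hE : (((List.ofFn (Fin.snoc X z : Fin (q+2) → α)).eraseIdx j.val).eraseIdx i.val)
      = (((List.ofFn X).eraseIdx j.val).eraseIdx i.val) ++ [z] := by
    rw [ofFn_snoc', List.eraseIdx_append_of_lt_length (by simp only [List.length_ofFn]; omega),
      List.eraseIdx_append_of_lt_length (by rw [hlen0]; omega)]
  funext k
  refine Fin.lastCases ?_ (fun k' => ?_) k
  · rw [Fin.snoc_last]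
    have hk : (Fin.last q).val = q := rfl
    rw [hk, if_neg (by omega)]
    unfold removeTwo
    rw [show (Fin.castSucc i).val = i.val from rfl, show (Fin.castSucc j).val = j.val from rfl, hE]
    rw [List.getD_eq_getElem _ _ (by simp only [List.length_append, hlen, List.length_singleton]; omega)]
    rw [List.getElem_append_right (le_of_eq hlen)]
    simp [hlen]
  · rw [Fin.snoc_castSucc]
    have hkv : (Fin.castSucc k').val = k'.val := rfl
    rw [hkv]
    rcases Nat.eq_zero_or_pos k'.val with h0 | h0
    · rw [if_pos h0, if_pos h0]
    · rw [if_neg (by omega), if_neg (by omega)]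
      unfold removeTwo
      rw [show (Fin.castSucc i).val = i.val from rfl, show (Fin.castSucc j).val = j.val from rfl,
        hE]
      have hk'q : k'.val - 1 < q - 1 := by have := k'.isLt; omega
      rw [List.getD_append _ _ _ _ (by rw [hlen]; omega)]

/-- `snoc` as an `update` of the `z`-slot. -/
lemma snoc_eq_update {q : ℕ} (u : Fin q → ℂ) (z : ℂ) :
    (Fin.snoc u z : Fin (q + 1) → ℂ)
      = Function.update (Fin.snoc u 0) (Fin.last q) z := by
  funext k
  refine Fin.lastCases ?_ (fun k' => ?_) k
  · simp
  · rw [Fin.snoc_castSucc, Function.update_of_ne (Fin.castSucc_lt_last k').ne, Fin.snoc_castSucc]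

end Aux


section MainAux

variable (q : ℕ)

/-- scalar factor of a `dW`-summand. -/
noncomputable def auxc (X : Fin (q+1) → Fin 2) (l : Fin (q+1) → ℂ)
    (p : Fin (q+1) × Fin (q+1)) : ℂ :=
  (-1 : ℂ) ^ (p.1.val + p.2.val) * bcoef (X p.1) (X p.2) * (l p.1 - l p.2)

/-- basis argument tuple of a `dW`-summand, with `L` appended. -/
def auxT (X : Fin (q+1) → Fin 2) (p : Fin (q+1) × Fin (q+1)) : Fin (q+1) → Fin 2 :=
  Fin.snoc (fun k : Fin q => if k.val = 0 then bres (X p.1) (X p.2)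
    else removeTwo p.1 p.2 X 0 (k.val - 1)) 0

/-- variable tuple of a `dW`-summand. -/
noncomputable def auxu (l : Fin (q+1) → ℂ) (p : Fin (q+1) × Fin (q+1)) : Fin q → ℂ :=
  fun k => if k.val = 0 then l p.1 + l p.2 else removeTwo p.1 p.2 l 0 (k.val - 1)

/-- the function whose derivative at `0` appears in a `B`-type summand. -/
noncomputable def auxf (γ : WCochain (q+1)) (X : Fin (q+1) → Fin 2) (l : Fin (q+1) → ℂ)
    (p : Fin (q+1) × Fin (q+1)) : ℂ → ℂ :=
  fun z => γ (auxT q X p) (Fin.snoc (auxu q l p) z)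

lemma bcoef_zero (x : Fin 2) : bcoef x 0 = 1 := by
  unfold bcoef
  rw [if_neg]
  rintro ⟨-, h⟩
  exact absurd h (by decide)

lemma bres_zero : ∀ x : Fin 2, bres x 0 = x := by decide

end MainAux

/-- `γ` is homogeneous of total polynomial degree `n` in `λ₁,…,λ_q`. -/
def IsHomogCochain {q : ℕ} (n : ℕ) (γ : WCochain q) : Prop :=
  ∀ X, ∃ P : MvPolynomial (Fin q) ℂ, P.IsHomogeneous n ∧ ∀ l, γ X l = eval l P

/-- the homotopy operator
`(τγ)_{λ₁,…,λ_{q−1}}(X₁,…,X_{q−1})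
  = (−1)^{q−1} ∂/∂λ γ_{λ₁,…,λ_{q−1},λ}(X₁,…,X_{q−1},L)|_{λ=0}`. -/
noncomputable def tauW {q : ℕ} (γ : WCochain (q + 1)) : WCochain q :=
  fun X l => (-1 : ℂ) ^ q * deriv (fun z : ℂ => γ (Fin.snoc X 0) (Fin.snoc l z)) 0

set_option maxHeartbeats 2000000 in
/-- for a homogeneous `(q+1)`-cochain `γ` of polynomial degree
`n` in the basic complex of `𝒲` with trivial coefficients,
`(dτ + τd)γ = (deg γ − (q+1))·γ`. -/
theorem stmt15 (q n : ℕ) (γ : WCochain (q + 1))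
    (h₁ : IsCochain γ) (h₂ : IsHomogCochain n γ) :
    dW (tauW γ) + tauW (dW γ) = ((n : ℂ) - (q + 1 : ℕ)) • γ := by
  funext X l
  obtain ⟨P, hP, hPe⟩ := h₂ X
  have hskew := h₁.2
  -- the two members of the homotopy identity
  have h1 : dW (tauW γ) X l
      = ∑ p ∈ Finset.univ.filter (fun p : Fin (q+1) × Fin (q+1) => p.1 < p.2),
          auxc q X l p * ((-1 : ℂ) ^ q * deriv (auxf q γ X l p) 0) := rfl
  have h2t : tauW (dW γ) X l
      = (-1 : ℂ) ^ (q + 1) * deriv (fun z => dW γ ((Fin.snoc X 0 : Fin (q+2) → Fin 2)) ((Fin.snoc l z : Fin (q+2) → ℂ))) 0 := rfl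
  -- splitting of `z ↦ (dγ)(X,L)(l,z)` into `B`-terms and `A`-terms
  have hsplit : ∀ z : ℂ, dW γ ((Fin.snoc X 0 : Fin (q+2) → Fin 2)) ((Fin.snoc l z : Fin (q+2) → ℂ))
      = (∑ p ∈ Finset.univ.filter (fun p : Fin (q+1) × Fin (q+1) => p.1 < p.2),
          auxc q X l p * auxf q γ X l p z)
        + ∑ i : Fin (q + 1),
            (-1 : ℂ) ^ (q + 1) * ((l i - z) * eval (Function.update l i (l i + z)) P) := by
    intro z
    have hA : ∀ i : Fin (q+1),
        (if (Fin.castSucc i : Fin (q+2)) < Fin.last (q+1) then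
          (-1 : ℂ) ^ ((Fin.castSucc i : Fin (q+2)).val + (Fin.last (q+1)).val)
            * bcoef ((Fin.snoc X 0 : Fin (q+2) → Fin 2) (Fin.castSucc i)) ((Fin.snoc X 0 : Fin (q+2) → Fin 2) (Fin.last (q+1)))
            * ((Fin.snoc l z : Fin (q+2) → ℂ) (Fin.castSucc i) - (Fin.snoc l z : Fin (q+2) → ℂ) (Fin.last (q+1)))
            * γ (fun k => if k.val = 0 then
                  bres ((Fin.snoc X 0 : Fin (q+2) → Fin 2) (Fin.castSucc i)) ((Fin.snoc X 0 : Fin (q+2) → Fin 2) (Fin.last (q+1)))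
                else removeTwo (Fin.castSucc i) (Fin.last (q+1)) ((Fin.snoc X 0 : Fin (q+2) → Fin 2)) 0 (k.val - 1))
              (fun k => if k.val = 0 then
                  (Fin.snoc l z : Fin (q+2) → ℂ) (Fin.castSucc i) + (Fin.snoc l z : Fin (q+2) → ℂ) (Fin.last (q+1))
                else removeTwo (Fin.castSucc i) (Fin.last (q+1)) ((Fin.snoc l z : Fin (q+2) → ℂ)) 0 (k.val - 1))
          else 0)
        = (-1 : ℂ) ^ (q + 1) * ((l i - z) * eval (Function.update l i (l i + z)) P) := by
      intro i
      rw [if_pos (Fin.castSucc_lt_last i)]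
      simp only [Fin.snoc_castSucc, Fin.snoc_last, bcoef_zero, bres_zero, removeTwo_snoc_last]
      rw [tupleA X (X i) i 0, Function.update_eq_self, tupleA l (l i + z) i 0]
      rw [hskew ((i.cycleRange)⁻¹) X (Function.update l i (l i + z))]
      have hsign : (((Equiv.Perm.sign ((i.cycleRange)⁻¹) : ℤ)) : ℂ) = (-1 : ℂ) ^ (i.val) := by
        rw [Equiv.Perm.sign_inv, Fin.sign_cycleRange]
        simp
      rw [hsign, hPe]
      have hs : ((-1 : ℂ)) ^ ((Fin.castSucc i : Fin (q+2)).val + (Fin.last (q+1)).val)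
          = (-1 : ℂ) ^ (i.val + (q + 1)) := rfl
      rw [hs]
      have hs2 : ((-1 : ℂ)) ^ (i.val + (q+1)) * (-1 : ℂ) ^ (i.val) = (-1 : ℂ) ^ (q + 1) := by
        rw [← pow_add, show i.val + (q+1) + i.val = 2 * i.val + (q+1) by ring, pow_add, pow_mul]
        norm_num
      calc (-1 : ℂ) ^ (i.val + (q+1)) * 1 * (l i - z)
            * ((-1 : ℂ) ^ (i.val) * eval (Function.update l i (l i + z)) P)
          = ((-1 : ℂ) ^ (i.val + (q+1)) * (-1 : ℂ) ^ (i.val))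
            * ((l i - z) * eval (Function.update l i (l i + z)) P) := by ring
        _ = _ := by rw [hs2]
    have hB : ∀ i j : Fin (q+1),
        (if (Fin.castSucc i : Fin (q+2)) < Fin.castSucc j then
          (-1 : ℂ) ^ ((Fin.castSucc i : Fin (q+2)).val + (Fin.castSucc j : Fin (q+2)).val)
            * bcoef ((Fin.snoc X 0 : Fin (q+2) → Fin 2) (Fin.castSucc i)) ((Fin.snoc X 0 : Fin (q+2) → Fin 2) (Fin.castSucc j))
            * ((Fin.snoc l z : Fin (q+2) → ℂ) (Fin.castSucc i) - (Fin.snoc l z : Fin (q+2) → ℂ) (Fin.castSucc j))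
            * γ (fun k => if k.val = 0 then
                  bres ((Fin.snoc X 0 : Fin (q+2) → Fin 2) (Fin.castSucc i)) ((Fin.snoc X 0 : Fin (q+2) → Fin 2) (Fin.castSucc j))
                else removeTwo (Fin.castSucc i) (Fin.castSucc j) ((Fin.snoc X 0 : Fin (q+2) → Fin 2)) 0 (k.val - 1))
              (fun k => if k.val = 0 then
                  (Fin.snoc l z : Fin (q+2) → ℂ) (Fin.castSucc i) + (Fin.snoc l z : Fin (q+2) → ℂ) (Fin.castSucc j)
                else removeTwo (Fin.castSucc i) (Fin.castSucc j) ((Fin.snoc l z : Fin (q+2) → ℂ)) 0 (k.val - 1))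
          else 0)
        = if i < j then auxc q X l (i, j) * auxf q γ X l (i, j) z else 0 := by
      intro i j
      by_cases hij : i < j
      · rw [if_pos (by exact Fin.castSucc_lt_castSucc_iff.mpr hij), if_pos hij]
        simp only [Fin.snoc_castSucc]
        rw [← tupleB i j hij X (bres (X i) (X j)) 0 0, ← tupleB i j hij l (l i + l j) z 0]
        rfl
      · rw [if_neg (by simpa [Fin.castSucc_lt_castSucc_iff] using hij), if_neg hij]
    calc dW γ ((Fin.snoc X 0 : Fin (q+2) → Fin 2)) ((Fin.snoc l z : Fin (q+2) → ℂ))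
        = ∑ p : Fin (q+2) × Fin (q+2), if p.1 < p.2 then
            (-1 : ℂ) ^ (p.1.val + p.2.val) * bcoef ((Fin.snoc X 0 : Fin (q+2) → Fin 2) p.1) ((Fin.snoc X 0 : Fin (q+2) → Fin 2) p.2)
              * ((Fin.snoc l z : Fin (q+2) → ℂ) p.1 - (Fin.snoc l z : Fin (q+2) → ℂ) p.2)
              * γ (fun k => if k.val = 0 then bres ((Fin.snoc X 0 : Fin (q+2) → Fin 2) p.1) ((Fin.snoc X 0 : Fin (q+2) → Fin 2) p.2)
                    else removeTwo p.1 p.2 ((Fin.snoc X 0 : Fin (q+2) → Fin 2)) 0 (k.val - 1))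
                  (fun k => if k.val = 0 then (Fin.snoc l z : Fin (q+2) → ℂ) p.1 + (Fin.snoc l z : Fin (q+2) → ℂ) p.2
                    else removeTwo p.1 p.2 ((Fin.snoc l z : Fin (q+2) → ℂ)) 0 (k.val - 1))
          else 0 := Finset.sum_filter _ _
      _ = ∑ a : Fin (q+2), ∑ b : Fin (q+2), if a < b then
            (-1 : ℂ) ^ (a.val + b.val) * bcoef ((Fin.snoc X 0 : Fin (q+2) → Fin 2) a) ((Fin.snoc X 0 : Fin (q+2) → Fin 2) b)
              * ((Fin.snoc l z : Fin (q+2) → ℂ) a - (Fin.snoc l z : Fin (q+2) → ℂ) b)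
              * γ (fun k => if k.val = 0 then bres ((Fin.snoc X 0 : Fin (q+2) → Fin 2) a) ((Fin.snoc X 0 : Fin (q+2) → Fin 2) b)
                    else removeTwo a b ((Fin.snoc X 0 : Fin (q+2) → Fin 2)) 0 (k.val - 1))
                  (fun k => if k.val = 0 then (Fin.snoc l z : Fin (q+2) → ℂ) a + (Fin.snoc l z : Fin (q+2) → ℂ) b
                    else removeTwo a b ((Fin.snoc l z : Fin (q+2) → ℂ)) 0 (k.val - 1))
          else 0 := Fintype.sum_prod_type _
      _ = _ := by
          rw [Fin.sum_univ_castSucc]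
          have h3 : (∑ b : Fin (q+2), if Fin.last (q+1) < b then
              (-1 : ℂ) ^ ((Fin.last (q+1)).val + b.val)
                * bcoef ((Fin.snoc X 0 : Fin (q+2) → Fin 2) (Fin.last (q+1))) ((Fin.snoc X 0 : Fin (q+2) → Fin 2) b)
                * ((Fin.snoc l z : Fin (q+2) → ℂ) (Fin.last (q+1)) - (Fin.snoc l z : Fin (q+2) → ℂ) b)
                * γ (fun k => if k.val = 0 then
                      bres ((Fin.snoc X 0 : Fin (q+2) → Fin 2) (Fin.last (q+1))) ((Fin.snoc X 0 : Fin (q+2) → Fin 2) b)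
                    else removeTwo (Fin.last (q+1)) b ((Fin.snoc X 0 : Fin (q+2) → Fin 2)) 0 (k.val - 1))
                    (fun k => if k.val = 0 then (Fin.snoc l z : Fin (q+2) → ℂ) (Fin.last (q+1)) + (Fin.snoc l z : Fin (q+2) → ℂ) b
                      else removeTwo (Fin.last (q+1)) b ((Fin.snoc l z : Fin (q+2) → ℂ)) 0 (k.val - 1))
              else 0) = 0 :=
            Finset.sum_eq_zero fun j _ => if_neg (not_lt.mpr (Fin.le_last j))
          rw [h3, add_zero]
          have h4 := fun i : Fin (q+1) => Fin.sum_univ_castSucc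
            (f := fun b : Fin (q+2) => if Fin.castSucc i < b then
              (-1 : ℂ) ^ ((Fin.castSucc i : Fin (q+2)).val + b.val)
                * bcoef ((Fin.snoc X 0 : Fin (q+2) → Fin 2) (Fin.castSucc i)) ((Fin.snoc X 0 : Fin (q+2) → Fin 2) b)
                * ((Fin.snoc l z : Fin (q+2) → ℂ) (Fin.castSucc i) - (Fin.snoc l z : Fin (q+2) → ℂ) b)
                * γ (fun k => if k.val = 0 then
                      bres ((Fin.snoc X 0 : Fin (q+2) → Fin 2) (Fin.castSucc i)) ((Fin.snoc X 0 : Fin (q+2) → Fin 2) b)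
                    else removeTwo (Fin.castSucc i) b ((Fin.snoc X 0 : Fin (q+2) → Fin 2)) 0 (k.val - 1))
                    (fun k => if k.val = 0 then (Fin.snoc l z : Fin (q+2) → ℂ) (Fin.castSucc i) + (Fin.snoc l z : Fin (q+2) → ℂ) b
                      else removeTwo (Fin.castSucc i) b ((Fin.snoc l z : Fin (q+2) → ℂ)) 0 (k.val - 1))
              else 0)
          rw [Finset.sum_congr rfl fun i _ => h4 i, Finset.sum_add_distrib]
          congr 1
          · calc _ = ∑ i : Fin (q+1), ∑ j : Fin (q+1),
                  (if i < j then auxc q X l (i, j) * auxf q γ X l (i, j) z else 0) :=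
                Finset.sum_congr rfl fun i _ => Finset.sum_congr rfl fun j _ => hB i j
              _ = ∑ p : Fin (q+1) × Fin (q+1),
                  (if p.1 < p.2 then auxc q X l p * auxf q γ X l p z else 0) :=
                (Fintype.sum_prod_type (fun p : Fin (q+1) × Fin (q+1) =>
                  if p.1 < p.2 then auxc q X l p * auxf q γ X l p z else 0)).symm
              _ = _ := (Finset.sum_filter _ _).symm
          · exact Finset.sum_congr rfl fun i _ => hA i
  -- differentiating the split expression
  have hderivB : ∀ p ∈ Finset.univ.filter (fun p : Fin (q+1) × Fin (q+1) => p.1 < p.2),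
      HasDerivAt (fun z => auxc q X l p * auxf q γ X l p z)
        (auxc q X l p * deriv (auxf q γ X l p) 0) 0 := by
    intro p _
    obtain ⟨Q, hQ⟩ := h₁.1 (auxT q X p)
    have hfp : auxf q γ X l p
        = fun z => eval (Function.update (Fin.snoc (auxu q l p) 0) (Fin.last q) z) Q := by
      funext z
      rw [auxf, hQ, snoc_eq_update]
    have hd : HasDerivAt (auxf q γ X l p)
        (eval (Function.update (Fin.snoc (auxu q l p) 0) (Fin.last q) 0)
          (pderiv (Fin.last q) Q)) 0 := by
      rw [hfp]
      exact hasDerivAt_eval_update Q _ _ 0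
    rw [hd.deriv]
    exact hd.const_mul _
  have hderivA : ∀ i : Fin (q+1), HasDerivAt
      (fun z => (-1 : ℂ) ^ (q + 1) * ((l i - z) * eval (Function.update l i (l i + z)) P))
      ((-1 : ℂ) ^ (q + 1) * (l i * eval l (pderiv i P) - eval l P)) 0 := by
    intro i
    have ha : HasDerivAt (fun z : ℂ => l i - z) (-1) 0 := by
      simpa using (hasDerivAt_id (0 : ℂ)).const_sub (l i)
    have hb : HasDerivAt (fun z => eval (Function.update l i (l i + z)) P)
        (eval l (pderiv i P)) 0 := by
      have := hasDerivAt_eval_update' P l i (l i) 0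
      simpa [Function.update_eq_self] using this
    have h3 := (ha.mul hb).const_mul ((-1 : ℂ) ^ (q + 1))
    apply h3.congr_deriv
    simp [Function.update_eq_self]
    ring
  have hTotal : HasDerivAt (fun z => dW γ ((Fin.snoc X 0 : Fin (q+2) → Fin 2)) ((Fin.snoc l z : Fin (q+2) → ℂ)))
      ((∑ p ∈ Finset.univ.filter (fun p : Fin (q+1) × Fin (q+1) => p.1 < p.2),
          auxc q X l p * deriv (auxf q γ X l p) 0)
        + ∑ i : Fin (q+1), (-1 : ℂ) ^ (q + 1) * (l i * eval l (pderiv i P) - eval l P)) 0 := by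
    have htot := (HasDerivAt.fun_sum hderivB).add (HasDerivAt.fun_sum (u := Finset.univ) fun i _ => hderivA i)
    have hfe : (fun z => dW γ ((Fin.snoc X 0 : Fin (q+2) → Fin 2)) ((Fin.snoc l z : Fin (q+2) → ℂ)))
        = fun z => (∑ p ∈ Finset.univ.filter (fun p : Fin (q+1) × Fin (q+1) => p.1 < p.2),
            auxc q X l p * auxf q γ X l p z)
          + ∑ i : Fin (q+1),
              (-1 : ℂ) ^ (q + 1) * ((l i - z) * eval (Function.update l i (l i + z)) P) :=
      funext hsplit
    rw [hfe]
    exact htot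
  -- assembling
  show dW (tauW γ) X l + tauW (dW γ) X l = _
  rw [h1, h2t, hTotal.deriv, mul_add]
  have e1 : (∑ p ∈ Finset.univ.filter (fun p : Fin (q+1) × Fin (q+1) => p.1 < p.2),
        auxc q X l p * ((-1 : ℂ) ^ q * deriv (auxf q γ X l p) 0))
      + (-1 : ℂ) ^ (q + 1) * ∑ p ∈ Finset.univ.filter
          (fun p : Fin (q+1) × Fin (q+1) => p.1 < p.2), auxc q X l p * deriv (auxf q γ X l p) 0
      = 0 := by
    rw [Finset.mul_sum, ← Finset.sum_add_distrib]
    refine Finset.sum_eq_zero fun p _ => ?_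
    rw [show ((-1 : ℂ)) ^ (q + 1) = -(-1 : ℂ) ^ q by rw [pow_succ]; ring]
    ring
  have e2 : (-1 : ℂ) ^ (q + 1) * ∑ i : Fin (q+1),
        (-1 : ℂ) ^ (q + 1) * (l i * eval l (pderiv i P) - eval l P)
      = ((n : ℂ) - (q + 1 : ℂ)) * eval l P := by
    rw [Finset.mul_sum]
    have hone : ∀ x : ℂ, (-1 : ℂ) ^ (q + 1) * ((-1 : ℂ) ^ (q + 1) * x) = x := by
      intro x
      rw [← mul_assoc, ← pow_add, show (q+1) + (q+1) = 2 * (q+1) by ring, pow_mul]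
      norm_num
    simp_rw [hone]
    rw [Finset.sum_sub_distrib, euler_eval hP l, Finset.sum_const, Finset.card_univ,
      Fintype.card_fin]
    ring
  rw [← add_assoc, e1, zero_add, e2]
  simp only [Pi.smul_apply, smul_eq_mul, hPe l]
  push_cast
  ring
end
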